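/- arXiv:math/0509433 — 7 statements merged into one kernel-verified Lean document; each statement's English description precedes it below -/
import Mathlib

section
/- Let Z be a metric space and A, B ⊆ Z. Let 𝒰 be an open covering of A and 𝒱 an open covering of B, both with multiplicity at most m. If mesh(𝒱) ≤ L(𝒰)/2 then there exists an open covering 𝒲 of A ∪ B with multiplicity at most m, mesh(𝒲) ≤ max{mesh(𝒱), mesh(𝒰)}, and L(𝒲) ≥ min{L(𝒰)/2, L(𝒱)}. -/
open Set Filter ENNReal

noncomputable section

namespace BuyaloLebedeva

/-- `mesh 𝒰` is the supremum of the diameters of the members of `𝒰`. -/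
def mesh {Z : Type*} [PseudoMetricSpace Z] (𝒰 : Set (Set Z)) : ℝ≥0∞ :=
  ⨆ U ∈ 𝒰, EMetric.diam U

/-- The multiplicity of the family `𝒰` is at most `n`: any finite subfamily with a
common point has at most `n` members. -/
def MultLE {Z : Type*} (𝒰 : Set (Set Z)) (n : ℕ) : Prop :=
  ∀ F : Finset (Set Z), ↑F ⊆ 𝒰 → (∃ z : Z, ∀ U ∈ F, z ∈ U) → F.card ≤ n

/-- The Lebesgue number of the family `𝒰` as a covering of `A`:
`L(𝒰) = inf_{z ∈ A} sup_{U ∈ 𝒰} dist(z, Z∖U)`. -/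
def lebesgue {Z : Type*} [PseudoMetricSpace Z] (𝒰 : Set (Set Z)) (A : Set Z) : ℝ≥0∞ :=
  ⨅ z ∈ A, ⨆ U ∈ 𝒰, EMetric.infEdist z Uᶜ

/-- `f` is `lam`-quasi-homothetic with coefficient `R` on the subset `A` of its domain. -/
def QuasiHomothetic {Z Y : Type*} [PseudoMetricSpace Z] [PseudoMetricSpace Y]
    (A : Set Z) (f : Z → Y) (lam R : ℝ) : Prop :=
  ∀ z ∈ A, ∀ z' ∈ A,
    R * dist z z' / lam ≤ dist (f z) (f z') ∧ dist (f z) (f z') ≤ lam * R * dist z z'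

/-- `Z` is locally similar to `Y`. -/
def LocallySimilar (Z Y : Type*) [MetricSpace Z] [MetricSpace Y] : Prop :=
  ∃ lam : ℝ, 1 ≤ lam ∧ ∃ R₀ : ℝ, 1 < R₀ ∧ ∀ R : ℝ, R₀ ≤ R →
    ∀ A : Set Z, Bornology.IsBounded A → Metric.diam A ≤ min 1 (Metric.diam (univ : Set Y) / lam) / R →
      ∃ f : Z → Y, QuasiHomothetic A f lam R

/-- `X` is asymptotically similar to `Y`. -/
def AsympSimilar (X Y : Type*) [MetricSpace X] [MetricSpace Y] : Prop :=
  ∃ Λ₀ lam : ℝ, 1 ≤ Λ₀ ∧ 1 ≤ lam ∧ ∃ R₀ : ℝ, 1 < R₀ ∧ ∀ R : ℝ, R₀ ≤ R →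
    ∀ A : Set X, Bornology.IsBounded A → Metric.diam A ≤ R / Λ₀ →
      ∃ f : Y → X, QuasiHomothetic univ f lam R ∧
        ∃ g : X → X, (∀ a ∈ A, ∀ b ∈ A, dist (g a) (g b) = dist a b) ∧
          g '' A ⊆ Set.range f

/-- The capacity dimension of `Z` is at most `m`. -/
def CDimLE (Z : Type*) [MetricSpace Z] (m : ℕ) : Prop :=
  ∃ δ : ℝ, 0 < δ ∧ δ < 1 ∧ ∃ τ₀ : ℝ, 0 < τ₀ ∧ ∀ τ : ℝ, 0 < τ → τ ≤ τ₀ →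
    ∃ 𝒰 : Set (Set Z), (∀ U ∈ 𝒰, IsOpen U) ∧ ⋃₀ 𝒰 = univ ∧ MultLE 𝒰 (m + 1) ∧
      mesh 𝒰 ≤ ENNReal.ofReal τ ∧ ENNReal.ofReal (δ * τ) ≤ lebesgue 𝒰 univ

/-- The capacity dimension `cdim Z ∈ ℕ∞` (`⊤` if no integer works). -/
def cdim (Z : Type*) [MetricSpace Z] : ℕ∞ :=
  sInf {k : ℕ∞ | ∃ m : ℕ, k = (m : ℕ∞) ∧ CDimLE Z m}

/-- The asymptotic dimension of `X` is at most `n`. -/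
def AsdimLE (X : Type*) [MetricSpace X] (n : ℕ) : Prop :=
  ∀ d : ℝ, 0 < d →
    ∃ 𝒰 : Set (Set X), (∀ U ∈ 𝒰, IsOpen U) ∧ ⋃₀ 𝒰 = univ ∧ MultLE 𝒰 (n + 1) ∧
      mesh 𝒰 < ⊤ ∧ ENNReal.ofReal d ≤ lebesgue 𝒰 univ

/-- The asymptotic dimension `asdim X ∈ ℕ∞`. -/
def asdim (X : Type*) [MetricSpace X] : ℕ∞ :=
  sInf {k : ℕ∞ | ∃ n : ℕ, k = (n : ℕ∞) ∧ AsdimLE X n}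

/-- The asymptotic capacity dimension of `X` is at most `m`. -/
def ACDimLE (X : Type*) [MetricSpace X] (m : ℕ) : Prop :=
  ∃ δ : ℝ, 0 < δ ∧ δ < 1 ∧ ∃ R₀ : ℝ, 1 < R₀ ∧ ∀ R : ℝ, R₀ ≤ R →
    ∃ 𝒰 : Set (Set X), (∀ U ∈ 𝒰, IsOpen U) ∧ ⋃₀ 𝒰 = univ ∧ MultLE 𝒰 (m + 1) ∧
      mesh 𝒰 ≤ ENNReal.ofReal R ∧ ENNReal.ofReal (δ * R) ≤ lebesgue 𝒰 univ

/-- The asymptotic capacity dimension `Cdim X ∈ ℕ∞`. -/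
def aCdim (X : Type*) [MetricSpace X] : ℕ∞ :=
  sInf {k : ℕ∞ | ∃ m : ℕ, k = (m : ℕ∞) ∧ ACDimLE X m}

/-- The topological (Lebesgue covering) dimension of `Z` is at most `n`: every open cover
has an open refinement covering `Z` of multiplicity at most `n + 1`. -/
def TopDimLE (Z : Type*) [MetricSpace Z] (n : ℕ) : Prop :=
  ∀ 𝒰 : Set (Set Z), (∀ U ∈ 𝒰, IsOpen U) → ⋃₀ 𝒰 = univ →
    ∃ 𝒱 : Set (Set Z), (∀ V ∈ 𝒱, IsOpen V) ∧ ⋃₀ 𝒱 = univ ∧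
      (∀ V ∈ 𝒱, ∃ U ∈ 𝒰, V ⊆ U) ∧ MultLE 𝒱 (n + 1)

/-- The topological (Lebesgue covering) dimension `topDim Z ∈ ℕ∞`. -/
def topDim (Z : Type*) [MetricSpace Z] : ℕ∞ :=
  sInf {k : ℕ∞ | ∃ n : ℕ, k = (n : ℕ∞) ∧ TopDimLE Z n}

/-- `Z` is doubling at small scales. -/
def DoublingAtSmallScales (Z : Type*) [MetricSpace Z] : Prop :=
  ∃ N : ℕ, ∃ r₀ : ℝ, 0 < r₀ ∧ ∀ r : ℝ, 0 < r → r ≤ r₀ → ∀ x : Z,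
    ∃ s : Finset Z, s.card ≤ N ∧ Metric.ball x (2 * r) ⊆ ⋃ y ∈ s, Metric.ball y r

/-- `X` is asymptotically doubling. -/
def AsympDoubling (X : Type*) [MetricSpace X] : Prop :=
  ∃ N : ℕ, ∃ R₀ : ℝ, 1 < R₀ ∧ ∀ R : ℝ, R₀ ≤ R → ∀ x : X,
    ∃ s : Finset X, s.card ≤ N ∧ Metric.ball x (2 * R) ⊆ ⋃ y ∈ s, Metric.ball y R

/-- A compact metric space is self-similar if it is covered by the images of finitely
many homotheties of itself with coefficients in `(0,1)`. -/
def SelfSimilar (K : Type*) [MetricSpace K] : Prop :=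
  ∃ n : ℕ, 0 < n ∧ ∃ f : Fin n → K → K, ∃ h : Fin n → ℝ,
    (∀ a, 0 < h a ∧ h a < 1) ∧
    (∀ a x y, dist (f a x) (f a y) = h a * dist x y) ∧
    (univ : Set K) ⊆ ⋃ a, Set.range (f a)

/-! Gromov hyperbolic spaces and their boundaries at infinity. -/

/-- The Gromov product `(x|y)_o`. -/
def gromovProd {X : Type*} [MetricSpace X] (o x y : X) : ℝ :=
  (dist x o + dist y o - dist x y) / 2

/-- `X` is geodesic. -/
def IsGeodesicSpace (X : Type*) [MetricSpace X] : Prop :=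
  ∀ x y : X, ∃ γ : ℝ → X, γ 0 = x ∧ γ (dist x y) = y ∧
    ∀ s ∈ Set.Icc (0 : ℝ) (dist x y), ∀ t ∈ Set.Icc (0 : ℝ) (dist x y),
      dist (γ s) (γ t) = |s - t|

/-- `X` is `δ`-hyperbolic (Gromov product form of the `δ`-inequality). -/
def IsDeltaHyperbolic (X : Type*) [MetricSpace X] (δ : ℝ) : Prop :=
  ∀ o x y z : X, min (gromovProd o x z) (gromovProd o z y) - δ ≤ gromovProd o x y

/-- `X` is (Gromov) hyperbolic. -/
def IsHyperbolic (X : Type*) [MetricSpace X] : Prop :=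
  ∃ δ : ℝ, 0 ≤ δ ∧ IsDeltaHyperbolic X δ

/-- `X` is cobounded: the orbit of some bounded set under the isometry group covers `X`. -/
def Cobounded (X : Type*) [MetricSpace X] : Prop :=
  ∃ A : Set X, Bornology.IsBounded A ∧ ∀ x : X, ∃ g : X ≃ᵢ X, x ∈ g '' A

/-- A sequence converges to infinity. -/
def ConvToInf {X : Type*} [MetricSpace X] (o : X) (x : ℕ → X) : Prop :=
  Tendsto (fun p : ℕ × ℕ => gromovProd o (x p.1) (x p.2)) atTop atTop

/-- Equivalence of sequences converging to infinity. -/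
def seqEquiv {X : Type*} [MetricSpace X] (o : X)
    (x y : {s : ℕ → X // ConvToInf o s}) : Prop :=
  Tendsto (fun i => gromovProd o (x.1 i) (y.1 i)) atTop atTop

/-- The boundary at infinity of `X` (with base point `o`): classes of sequences
converging to infinity. -/
def Bdry (X : Type*) [MetricSpace X] (o : X) : Type _ :=
  Quot (seqEquiv o)

/-- The extended Gromov product on the boundary at infinity:
`(ξ|η)_o = inf liminf (x_i|y_i)_o` over representatives. -/
def bgp {X : Type*} [MetricSpace X] (o : X) (ξ η : Bdry X o) : ℝ≥0∞ :=
  ⨅ x : {s : {s : ℕ → X // ConvToInf o s} // Quot.mk (seqEquiv o) s = ξ},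
    ⨅ y : {s : {s : ℕ → X // ConvToInf o s} // Quot.mk (seqEquiv o) s = η},
      Filter.liminf (fun i => ENNReal.ofReal (gromovProd o (x.1.1 i) (y.1.1 i))) atTop

/-- `a^{-t}` for `t ∈ [0,∞]`, with the convention `a^{-∞} = 0`. -/
def visFactor (a : ℝ) (t : ℝ≥0∞) : ℝ :=
  if t = ⊤ then 0 else a ^ (-(t.toReal))

/-- `dB` is a visual metric on the boundary at infinity of `X` (w.r.t. base point `o`). -/
def IsVisualMetric {X : Type*} [MetricSpace X] (o : X) (dB : MetricSpace (Bdry X o)) : Prop :=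
  letI := dB
  ∃ a c₁ c₂ : ℝ, 1 < a ∧ 0 < c₁ ∧ 0 < c₂ ∧
    ∀ ξ η : Bdry X o,
      c₁ * visFactor a (bgp o ξ η) ≤ dist ξ η ∧ dist ξ η ≤ c₂ * visFactor a (bgp o ξ η)



/-! ### Auxiliary material for `statement5` -/

section Statement5Aux

variable {Z : Type*} [MetricSpace Z]

/-- `V` is contained in some member of `𝒰`. -/
private def Inn (𝒰 : Set (Set Z)) (V : Set Z) : Prop := ∃ U ∈ 𝒰, V ⊆ U

/-- Members of `𝒱` not contained in any member of `𝒰`. -/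
private def OuterF (𝒰 𝒱 : Set (Set Z)) : Set (Set Z) := {V | V ∈ 𝒱 ∧ ¬ Inn 𝒰 V}

open Classical in
/-- Assignment of a containing member of `𝒰` to an inner set. -/
private noncomputable def asg (𝒰 : Set (Set Z)) (V : Set Z) : Set Z :=
  if h : Inn 𝒰 V then h.choose else ∅

private lemma asg_spec {𝒰 : Set (Set Z)} {V : Set Z} (h : Inn 𝒰 V) :
    asg 𝒰 V ∈ 𝒰 ∧ V ⊆ asg 𝒰 V := by
  rw [asg, dif_pos h]
  exact h.choose_spec

/-- Union of the inner members of `𝒱` assigned to `U`. -/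
private def GF (𝒰 𝒱 : Set (Set Z)) (U : Set Z) : Set Z :=
  ⋃₀ {V | V ∈ 𝒱 ∧ Inn 𝒰 V ∧ asg 𝒰 V = U}

/-- The modified member of the cover associated to `U ∈ 𝒰`. -/
private def HF (𝒰 𝒱 : Set (Set Z)) (U : Set Z) : Set Z :=
  (U \ closure (⋃₀ OuterF 𝒰 𝒱)) ∪ GF 𝒰 𝒱 U

private lemma GF_subset {𝒰 𝒱 : Set (Set Z)} (U : Set Z) : GF 𝒰 𝒱 U ⊆ U := by
  rintro x ⟨V, ⟨hV𝒱, hVinn, hVasg⟩, hxV⟩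
  have h := (asg_spec hVinn).2 hxV
  rwa [hVasg] at h

private lemma HF_subset {𝒰 𝒱 : Set (Set Z)} (U : Set Z) : HF 𝒰 𝒱 U ⊆ U :=
  Set.union_subset Set.diff_subset (GF_subset U)

end Statement5Aux

/-- finite union lemma for coverings. -/
theorem statement5 {Z : Type*} [MetricSpace Z] (A B : Set Z) (𝒰 𝒱 : Set (Set Z)) (m : ℕ)
    (h𝒰o : ∀ U ∈ 𝒰, IsOpen U) (h𝒰c : A ⊆ ⋃₀ 𝒰) (h𝒰m : MultLE 𝒰 m)
    (h𝒱o : ∀ V ∈ 𝒱, IsOpen V) (h𝒱c : B ⊆ ⋃₀ 𝒱) (h𝒱m : MultLE 𝒱 m)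
    (hmesh : mesh 𝒱 ≤ lebesgue 𝒰 A / 2) :
    ∃ 𝒲 : Set (Set Z), (∀ W ∈ 𝒲, IsOpen W) ∧ A ∪ B ⊆ ⋃₀ 𝒲 ∧ MultLE 𝒲 m ∧
      mesh 𝒲 ≤ max (mesh 𝒱) (mesh 𝒰) ∧
      min (lebesgue 𝒰 A / 2) (lebesgue 𝒱 B) ≤ lebesgue 𝒲 (A ∪ B) := by
  classical
  rcases A.eq_empty_or_nonempty with hA | hA
  · refine ⟨𝒱, h𝒱o, ?_, h𝒱m, le_max_left _ _, ?_⟩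
    · rw [hA, Set.empty_union]; exact h𝒱c
    · rw [hA, Set.empty_union]; exact min_le_right _ _
  by_cases hμtop : mesh 𝒱 = ⊤
  · -- the mesh bound is trivial; `{univ}` works
    obtain ⟨a, ha⟩ := hA
    obtain ⟨U₀, hU₀, haU₀⟩ := h𝒰c ha
    have hm1 : 1 ≤ m := by
      have h := h𝒰m {U₀} (by simp [hU₀]) ⟨a, by simp [haU₀]⟩
      simpa using h
    refine ⟨{Set.univ}, ?_, ?_, ?_, ?_, ?_⟩
    · intro W hW
      rw [Set.mem_singleton_iff] at hW
      subst hW; exact isOpen_univ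
    · intro z _; exact ⟨Set.univ, rfl, trivial⟩
    · intro F hF hzF
      have hsub : F ⊆ ({Set.univ} : Finset (Set Z)) := by
        intro W hW
        have h := hF hW
        simpa using h
      calc F.card ≤ 1 := by simpa using Finset.card_le_card hsub
        _ ≤ m := hm1
    · have h : max (mesh 𝒱) (mesh 𝒰) = ⊤ := by rw [hμtop]; simp
      rw [h]; exact le_top
    · show _ ≤ ⨅ z ∈ A ∪ B, ⨆ W ∈ ({Set.univ} : Set (Set Z)), EMetric.infEdist z Wᶜ
      refine le_iInf₂ fun z hz => ?_
      have h : (⨆ W ∈ ({Set.univ} : Set (Set Z)), EMetric.infEdist z Wᶜ) = ⊤ := by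
        simp; exact Metric.infEDist_empty
      rw [h]; exact le_top
  · -- main construction
    have hfar : ∀ (z : Z) (U : Set Z), U ∈ 𝒰 → ∀ y ∈ ⋃₀ OuterF 𝒰 𝒱,
        EMetric.infEdist z Uᶜ - mesh 𝒱 ≤ edist z y := by
      rintro z U hU y ⟨V, ⟨hV𝒱, hVout⟩, hyV⟩
      by_contra hcon
      push_neg at hcon
      rw [lt_tsub_iff_right] at hcon
      refine hVout ⟨U, hU, fun v hv => ?_⟩
      by_contra hvU
      have h1 : EMetric.infEdist z Uᶜ ≤ edist z v := EMetric.infEdist_le_edist_of_mem hvU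
      have h3 : edist y v ≤ mesh 𝒱 :=
        (EMetric.edist_le_diam_of_mem hyV hv).trans (le_biSup (fun V => EMetric.diam V) hV𝒱)
      have h2 : edist z v ≤ edist z y + mesh 𝒱 :=
        (edist_triangle z y v).trans (add_le_add le_rfl h3)
      exact absurd (h1.trans h2) (not_le.mpr hcon)
    have hcl : ∀ (z : Z) (U : Set Z), U ∈ 𝒰 →
        EMetric.infEdist z Uᶜ - mesh 𝒱 ≤ EMetric.infEdist z (closure (⋃₀ OuterF 𝒰 𝒱)) := by
      intro z U hU
      exact (EMetric.le_infEdist.2 (hfar z U hU)).trans_eq Metric.infEDist_closure.symm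
    have hHdepth : ∀ (z : Z) (U : Set Z), U ∈ 𝒰 →
        EMetric.infEdist z Uᶜ - mesh 𝒱 ≤ EMetric.infEdist z (HF 𝒰 𝒱 U)ᶜ := by
      intro z U hU
      have h1 : (HF 𝒰 𝒱 U)ᶜ ⊆ (U \ closure (⋃₀ OuterF 𝒰 𝒱))ᶜ :=
        Set.compl_subset_compl.2 Set.subset_union_left
      have h2 : (U \ closure (⋃₀ OuterF 𝒰 𝒱))ᶜ = Uᶜ ∪ closure (⋃₀ OuterF 𝒰 𝒱) := by
        rw [Set.diff_eq, Set.compl_inter, compl_compl]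
      have h3 : EMetric.infEdist z Uᶜ - mesh 𝒱 ≤
          EMetric.infEdist z (Uᶜ ∪ closure (⋃₀ OuterF 𝒰 𝒱)) := by
        exact (le_inf tsub_le_self (hcl z U hU)).trans_eq Metric.infEDist_union.symm
      refine h3.trans (EMetric.infEdist_anti ?_)
      intro x hx
      rw [Set.mem_compl_iff, HF, Set.mem_union, not_or] at hx
      obtain ⟨hx1, _⟩ := hx
      by_cases hxU : x ∈ U
      · refine Or.inr ?_
        by_contra hc
        exact hx1 ⟨hxU, hc⟩
      · exact Or.inl hxU
    refine ⟨(HF 𝒰 𝒱 '' 𝒰) ∪ OuterF 𝒰 𝒱, ?_, ?_, ?_, ?_, ?_⟩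
    · -- openness
      rintro W (⟨U, hU, rfl⟩ | hWout)
      · refine IsOpen.union ((h𝒰o U hU).sdiff isClosed_closure) ?_
        exact isOpen_sUnion fun V hV => h𝒱o V hV.1
      · exact h𝒱o W hWout.1
    · -- covering
      rintro z (hzA | hzB)
      · have hex : ∃ U ∈ 𝒰, mesh 𝒱 < EMetric.infEdist z Uᶜ := by
          by_cases hμ0 : mesh 𝒱 = 0
          · obtain ⟨U, hU, hzU⟩ := h𝒰c hzA
            refine ⟨U, hU, ?_⟩
            rw [hμ0, pos_iff_ne_zero]
            intro h0
            have h := EMetric.mem_closure_iff_infEdist_zero.2 h0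
            rw [(h𝒰o U hU).isClosed_compl.closure_eq] at h
            exact h hzU
          · by_contra hcon
            push_neg at hcon
            have h1 : (⨆ U ∈ 𝒰, EMetric.infEdist z Uᶜ) ≤ mesh 𝒱 := iSup₂_le hcon
            have h2 : lebesgue 𝒰 A ≤ mesh 𝒱 := (biInf_le (fun z => ⨆ U ∈ 𝒰, EMetric.infEdist z Uᶜ) hzA).trans h1
            have h3 : mesh 𝒱 + mesh 𝒱 ≤ lebesgue 𝒰 A := by
              calc mesh 𝒱 + mesh 𝒱 ≤ lebesgue 𝒰 A / 2 + lebesgue 𝒰 A / 2 :=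
                    add_le_add hmesh hmesh
                _ = lebesgue 𝒰 A := ENNReal.add_halves _
            exact absurd ((ENNReal.lt_add_right hμtop hμ0).trans_le (h3.trans h2))
              (lt_irrefl _)
        obtain ⟨U, hU, hUz⟩ := hex
        have hzU : z ∈ U := by
          by_contra hzU
          have h0 : EMetric.infEdist z Uᶜ = 0 := EMetric.infEdist_zero_of_mem hzU
          rw [h0] at hUz
          exact absurd hUz (not_lt.2 zero_le)
        have hzcl : z ∉ closure (⋃₀ OuterF 𝒰 𝒱) := by
          intro hmem
          have h0 : EMetric.infEdist z (closure (⋃₀ OuterF 𝒰 𝒱)) = 0 :=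
            EMetric.infEdist_zero_of_mem hmem
          have h5 : EMetric.infEdist z Uᶜ - mesh 𝒱 ≤ 0 := h0 ▸ hcl z U hU
          rw [le_zero_iff, tsub_eq_zero_iff_le] at h5
          exact absurd h5 (not_le.2 hUz)
        exact ⟨HF 𝒰 𝒱 U, Set.mem_union_left _ (Set.mem_image_of_mem _ hU),
          Set.mem_union_left _ ⟨hzU, hzcl⟩⟩
      · obtain ⟨V, hV, hzV⟩ := h𝒱c hzB
        by_cases hInn : Inn 𝒰 V
        · exact ⟨HF 𝒰 𝒱 (asg 𝒰 V),
            Set.mem_union_left _ (Set.mem_image_of_mem _ (asg_spec hInn).1),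
            Set.mem_union_right _ ⟨V, ⟨hV, hInn, rfl⟩, hzV⟩⟩
        · exact ⟨V, Set.mem_union_right _ ⟨hV, hInn⟩, hzV⟩
    · -- multiplicity
      intro F hF hzex
      obtain ⟨z, hz⟩ := hzex
      by_cases hout : ∃ V₀ ∈ OuterF 𝒰 𝒱, z ∈ V₀
      · set g : Set Z → Set Z := fun W =>
          if h : ∃ V, V ∈ 𝒱 ∧ z ∈ V ∧
              ((W ∈ OuterF 𝒰 𝒱 ∧ V = W) ∨ (Inn 𝒰 V ∧ W = HF 𝒰 𝒱 (asg 𝒰 V)))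
          then h.choose else ∅ with hg
        have hrep : ∀ W ∈ F, ∃ V, V ∈ 𝒱 ∧ z ∈ V ∧
            ((W ∈ OuterF 𝒰 𝒱 ∧ V = W) ∨ (Inn 𝒰 V ∧ W = HF 𝒰 𝒱 (asg 𝒰 V))) := by
          intro W hWF
          have hzW : z ∈ W := hz W hWF
          rcases hF hWF with (⟨U, hU, rfl⟩ | hWout)
          · rcases hzW with h1 | h2
            · obtain ⟨V₀, hV₀, hzV₀⟩ := hout
              have hzOS : z ∈ ⋃₀ OuterF 𝒰 𝒱 := ⟨V₀, hV₀, hzV₀⟩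
              exact absurd (subset_closure hzOS) h1.2
            · obtain ⟨V, ⟨hV𝒱, hVinn, hVasg⟩, hzV⟩ := h2
              exact ⟨V, hV𝒱, hzV, Or.inr ⟨hVinn, by rw [hVasg]⟩⟩
          · exact ⟨W, hWout.1, hzW, Or.inl ⟨hWout, rfl⟩⟩
        have hgspec : ∀ W ∈ F, g W ∈ 𝒱 ∧ z ∈ g W ∧
            ((W ∈ OuterF 𝒰 𝒱 ∧ g W = W) ∨ (Inn 𝒰 (g W) ∧ W = HF 𝒰 𝒱 (asg 𝒰 (g W)))) := by
          intro W hWF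
          have h := hrep W hWF
          rw [hg]
          simp only [dif_pos h]
          exact h.choose_spec
        have hinj : Set.InjOn g F := by
          intro W₁ h₁ W₂ h₂ heq
          obtain ⟨hV₁, hz₁, hc₁⟩ := hgspec W₁ h₁
          obtain ⟨hV₂, hz₂, hc₂⟩ := hgspec W₂ h₂
          rcases hc₁ with ⟨hO₁, he₁⟩ | ⟨hi₁, he₁⟩ <;>
            rcases hc₂ with ⟨hO₂, he₂⟩ | ⟨hi₂, he₂⟩
          · rw [← he₁, ← he₂, heq]
          · exact absurd (by rw [← he₁, heq]; exact hi₂) hO₁.2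
          · exact absurd (by rw [← he₂, ← heq]; exact hi₁) hO₂.2
          · rw [he₁, he₂, heq]
        rw [← Finset.card_image_of_injOn hinj]
        refine h𝒱m (F.image g) ?_ ⟨z, ?_⟩
        · intro x hx
          rw [Finset.coe_image] at hx
          obtain ⟨W, hWF, rfl⟩ := hx
          exact (hgspec W hWF).1
        · intro V hVmem
          rw [Finset.mem_image] at hVmem
          obtain ⟨W, hWF, rfl⟩ := hVmem
          exact (hgspec W hWF).2.1
      · set g : Set Z → Set Z := fun W =>
          if h : ∃ U, U ∈ 𝒰 ∧ W = HF 𝒰 𝒱 U then h.choose else ∅ with hg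
        have hrep : ∀ W ∈ F, ∃ U, U ∈ 𝒰 ∧ W = HF 𝒰 𝒱 U := by
          intro W hWF
          rcases hF hWF with (⟨U, hU, rfl⟩ | hWout)
          · exact ⟨U, hU, rfl⟩
          · exact absurd ⟨W, hWout, hz W hWF⟩ hout
        have hgspec : ∀ W ∈ F, g W ∈ 𝒰 ∧ W = HF 𝒰 𝒱 (g W) := by
          intro W hWF
          have h := hrep W hWF
          rw [hg]
          simp only [dif_pos h]
          exact h.choose_spec
        have hinj : Set.InjOn g F := by
          intro W₁ h₁ W₂ h₂ heq
          rw [(hgspec W₁ h₁).2, (hgspec W₂ h₂).2, heq]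
        rw [← Finset.card_image_of_injOn hinj]
        refine h𝒰m (F.image g) ?_ ⟨z, ?_⟩
        · intro x hx
          rw [Finset.coe_image] at hx
          obtain ⟨W, hWF, rfl⟩ := hx
          exact (hgspec W hWF).1
        · intro U hUmem
          rw [Finset.mem_image] at hUmem
          obtain ⟨W, hWF, rfl⟩ := hUmem
          exact HF_subset _ ((hgspec W hWF).2 ▸ hz W hWF)
    · -- mesh bound
      refine iSup₂_le fun W hW => ?_
      rcases hW with ⟨U, hU, rfl⟩ | hWout
      · exact le_max_of_le_right ((EMetric.diam_mono (HF_subset U)).trans (le_biSup (fun U => EMetric.diam U) hU))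
      · exact le_max_of_le_left (le_biSup (fun V => EMetric.diam V) hWout.1)
    · -- Lebesgue number bound
      show _ ≤ ⨅ z ∈ A ∪ B,
        ⨆ W ∈ (HF 𝒰 𝒱 '' 𝒰) ∪ OuterF 𝒰 𝒱, EMetric.infEdist z Wᶜ
      refine le_iInf₂ fun z hz => ?_
      rcases hz with hzA | hzB
      · have hstep : lebesgue 𝒰 A / 2 ≤ lebesgue 𝒰 A - mesh 𝒱 := by
          refine (ENNReal.cancel_of_ne hμtop).le_tsub_of_add_le_right ?_
          calc lebesgue 𝒰 A / 2 + mesh 𝒱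
              ≤ lebesgue 𝒰 A / 2 + lebesgue 𝒰 A / 2 := add_le_add le_rfl hmesh
            _ = lebesgue 𝒰 A := ENNReal.add_halves _
        refine le_trans (min_le_left _ _) (le_trans hstep ?_)
        rw [tsub_le_iff_right]
        have hℓz : lebesgue 𝒰 A ≤ ⨆ U ∈ 𝒰, EMetric.infEdist z Uᶜ :=
          biInf_le (fun z => ⨆ U ∈ 𝒰, EMetric.infEdist z Uᶜ) hzA
        refine hℓz.trans (iSup₂_le fun U hU => ?_)
        calc EMetric.infEdist z Uᶜ
            ≤ (EMetric.infEdist z Uᶜ - mesh 𝒱) + mesh 𝒱 := le_tsub_add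
          _ ≤ EMetric.infEdist z (HF 𝒰 𝒱 U)ᶜ + mesh 𝒱 :=
              add_le_add (hHdepth z U hU) le_rfl
          _ ≤ (⨆ W ∈ (HF 𝒰 𝒱 '' 𝒰) ∪ OuterF 𝒰 𝒱, EMetric.infEdist z Wᶜ) + mesh 𝒱 :=
              add_le_add
                (le_biSup (fun W => EMetric.infEdist z Wᶜ) (Set.mem_union_left _ (Set.mem_image_of_mem _ hU))) le_rfl
      · refine le_trans (min_le_right _ _) ?_
        have h1 : lebesgue 𝒱 B ≤ ⨆ V ∈ 𝒱, EMetric.infEdist z Vᶜ := biInf_le (fun z => ⨆ V ∈ 𝒱, EMetric.infEdist z Vᶜ) hzB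
        refine h1.trans (iSup₂_le fun V hV => ?_)
        by_cases hInn : Inn 𝒰 V
        · have hVsub : V ⊆ HF 𝒰 𝒱 (asg 𝒰 V) := by
            intro x hx
            exact Set.mem_union_right _ ⟨V, ⟨hV, hInn, rfl⟩, hx⟩
          have hmem : HF 𝒰 𝒱 (asg 𝒰 V) ∈ (HF 𝒰 𝒱 '' 𝒰) ∪ OuterF 𝒰 𝒱 :=
            Set.mem_union_left _ (Set.mem_image_of_mem _ (asg_spec hInn).1)
          exact (EMetric.infEdist_anti (Set.compl_subset_compl.2 hVsub)).trans
            (le_biSup (fun W => EMetric.infEdist z Wᶜ) hmem)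
        · exact le_biSup (fun W => EMetric.infEdist z Wᶜ) (Set.mem_union_right _ ⟨hV, hInn⟩)

end BuyaloLebedeva
end
end

section
/- If a metric space X is asymptotically similar to a compact metric space Y, then X is asymptotically doubling. -/
open Set Filter ENNReal

noncomputable section

namespace BuyaloLebedeva

/-- If a metric space `X` is asymptotically similar to a compact metric
space `Y`, then `X` is asymptotically doubling. -/
theorem statement7 {X Y : Type*} [MetricSpace X] [MetricSpace Y] [CompactSpace Y]
    (h : AsympSimilar X Y) :
    AsympDoubling X := by
  classical
  obtain ⟨Λ₀, lam, hΛ, hlam, R₀, hR₀, hsim⟩ := h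
  have hΛ0 : (0:ℝ) < Λ₀ := lt_of_lt_of_le one_pos hΛ
  have hlam0 : (0:ℝ) < lam := lt_of_lt_of_le one_pos hlam
  set ε : ℝ := 1 / (16 * lam * Λ₀) with hε
  have hεpos : 0 < ε := by positivity
  obtain ⟨t, -, htfin, htcov⟩ :=
    finite_cover_balls_of_compact (isCompact_univ (X := Y)) hεpos
  refine ⟨htfin.toFinset.card, R₀, hR₀, fun R hR x => ?_⟩
  have hRpos : (0:ℝ) < R := lt_trans one_pos (lt_of_lt_of_le hR₀ hR)
  have hR' : R₀ ≤ 4 * Λ₀ * R := by nlinarith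
  have hdiam : Metric.diam (Metric.ball x (2*R)) ≤ 4 * Λ₀ * R / Λ₀ := by
    have h1 : Metric.diam (Metric.ball x (2*R)) ≤ 2 * (2*R) :=
      Metric.diam_ball (by linarith)
    have h2 : 4 * Λ₀ * R / Λ₀ = 4 * R := by field_simp
    linarith
  obtain ⟨f, hf, g, hgiso, hgsub⟩ := hsim _ hR' (Metric.ball x (2*R)) Metric.isBounded_ball hdiam
  -- key bound: points of Y within ε map within R/4
  have key : ∀ z c : Y, dist z c < ε → dist (f z) (f c) ≤ R / 4 := by
    intro z c hzc
    have h1 := (hf z (mem_univ z) c (mem_univ c)).2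
    have h2 : lam * (4 * Λ₀ * R) * dist z c ≤ lam * (4 * Λ₀ * R) * ε := by
      apply mul_le_mul_of_nonneg_left hzc.le
      positivity
    have h3 : lam * (4 * Λ₀ * R) * ε = R / 4 := by
      rw [hε]; field_simp; ring
    linarith
  -- choice of centers
  set P : Y → Prop := fun c => ∃ a, a ∈ Metric.ball x (2*R) ∧ dist (g a) (f c) ≤ R/4
    with hP
  set φ : Y → X := fun c => if h : P c then h.choose else x with hφ
  refine ⟨htfin.toFinset.image φ, Finset.card_image_le, fun a ha => ?_⟩
  obtain ⟨z, hz⟩ := hgsub (Set.mem_image_of_mem g ha)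
  obtain ⟨c, hct, hzc⟩ := by
    have := htcov (mem_univ z)
    simpa using this
  have hPc : P c := ⟨a, ha, by rw [← hz]; exact key z c hzc⟩
  have hφc : φ c = hPc.choose := by simp [hφ, hPc]
  obtain ⟨haφ, hdφ⟩ := hPc.choose_spec
  have hdd : dist a (φ c) ≤ R/2 := by
    have h1 : dist (g a) (g (φ c)) = dist a (φ c) := by
      rw [hφc]; exact hgiso a ha _ haφ
    have h2 : dist (g a) (g (φ c)) ≤ dist (g a) (f c) + dist (f c) (g (φ c)) :=
      dist_triangle _ _ _
    have h3 : dist (g a) (f c) ≤ R/4 := by rw [← hz]; exact key z c hzc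
    have h4 : dist (f c) (g (φ c)) ≤ R/4 := by rw [dist_comm, hφc]; exact hdφ
    linarith
  refine Set.mem_iUnion.2 ⟨φ c, Set.mem_iUnion.2 ⟨?_, ?_⟩⟩
  · exact Finset.mem_image_of_mem φ (htfin.mem_toFinset.2 hct)
  · exact Metric.mem_ball.2 (by linarith)

end BuyaloLebedeva
end
end

section
/- If a metric space Z is doubling at small scales, then its capacity dimension is finite: cdim Z < ∞. -/
open Set Filter ENNReal

noncomputable section

namespace BuyaloLebedeva

lemma exists_net' {Z : Type*} [MetricSpace Z] {ε : ℝ} (hε : 0 < ε) :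
    ∃ S : Set Z, (∀ x ∈ S, ∀ y ∈ S, x ≠ y → ε ≤ dist x y) ∧
      ∀ z : Z, ∃ x ∈ S, dist z x < ε := by
  set 𝒮 : Set (Set Z) := {S | ∀ x ∈ S, ∀ y ∈ S, x ≠ y → ε ≤ dist x y} with h𝒮
  obtain ⟨m, hm⟩ := zorn_subset 𝒮 (fun c hc hchain => by
    refine ⟨⋃₀ c, ?_, fun s hs => subset_sUnion_of_mem hs⟩
    rintro x ⟨s, hs, hxs⟩ y ⟨t, ht, hyt⟩ hxy
    rcases hchain.total hs ht with hst | hts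
    · exact hc ht x (hst hxs) y hyt hxy
    · exact hc hs x hxs y (hts hyt) hxy)
  refine ⟨m, hm.prop, fun z => ?_⟩
  by_contra hcon
  push_neg at hcon
  have hz : z ∈ m := by
    have hmem : m ∪ {z} ∈ 𝒮 := by
      rintro x (hx | rfl) y (hy | rfl) hxy
      · exact hm.prop x hx y hy hxy
      · rw [dist_comm]; exact hcon x hx
      · exact hcon y hy
      · simp at hxy
    have := hm.2 hmem subset_union_left
    exact this (mem_union_right _ rfl)
  exact absurd (hcon z hz) (by simp [hε.not_ge])

lemma double_cover' {Z : Type*} [MetricSpace Z] {N : ℕ} {r₀ : ℝ} (hr₀ : 0 < r₀)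
    (hd : ∀ r : ℝ, 0 < r → r ≤ r₀ → ∀ x : Z,
      ∃ s : Finset Z, s.card ≤ N ∧ Metric.ball x (2 * r) ⊆ ⋃ y ∈ s, Metric.ball y r)
    {r : ℝ} (hr : 0 < r) (hrr₀ : r / 2 ≤ r₀) (z : Z) :
    ∃ s : Finset Z, s.card ≤ N * N ∧ Metric.ball z r ⊆ ⋃ y ∈ s, Metric.ball y (r / 4) := by
  obtain ⟨s₁, hs₁card, hs₁⟩ := hd (r / 2) (by linarith) hrr₀ z
  have h4 : ∀ y : Z, ∃ s : Finset Z, s.card ≤ N ∧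
      Metric.ball y (r / 2) ⊆ ⋃ w ∈ s, Metric.ball w (r / 4) := by
    intro y
    obtain ⟨s, hc, hsub⟩ := hd (r / 4) (by linarith) (by linarith) y
    exact ⟨s, hc, by convert hsub using 2; ring⟩
  classical
  choose t htcard htsub using h4
  refine ⟨s₁.biUnion t, ?_, ?_⟩
  · calc (s₁.biUnion t).card ≤ ∑ y ∈ s₁, (t y).card := Finset.card_biUnion_le
    _ ≤ s₁.card * N := Finset.sum_le_card_nsmul _ _ _ (fun y _ => htcard y)
    _ ≤ N * N := Nat.mul_le_mul_right _ hs₁card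
  · intro w hw
    have : w ∈ Metric.ball z (2 * (r / 2)) := by
      rw [show 2 * (r / 2) = r by ring]; exact hw
    obtain ⟨y, hy, hwy⟩ := by simpa using hs₁ this
    obtain ⟨v, hv, hwv⟩ := by simpa using htsub y hwy
    exact mem_iUnion₂.mpr ⟨v, Finset.mem_biUnion.mpr ⟨y, hy, hv⟩, hwv⟩

lemma card_le_of_assign' {α β : Type*} {F : Finset α} {s : Finset β} {P : α → β → Prop}
    (h : ∀ a ∈ F, ∃ b ∈ s, P a b)
    (hinj : ∀ a ∈ F, ∀ a' ∈ F, ∀ b, P a b → P a' b → a = a') :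
    F.card ≤ s.card := by
  classical
  rcases F.eq_empty_or_nonempty with rfl | ⟨a₀, ha₀⟩
  · simp
  obtain ⟨b₀, hb₀, -⟩ := h a₀ ha₀
  set f : α → β := fun a => if hc : ∃ b ∈ s, P a b then hc.choose else b₀ with hf
  have hmem : ∀ a ∈ F, f a ∈ s ∧ P a (f a) := by
    intro a ha
    have hc : ∃ b ∈ s, P a b := h a ha
    simp only [hf, dif_pos hc]
    exact ⟨hc.choose_spec.1, hc.choose_spec.2⟩
  exact Finset.card_le_card_of_injOn f (fun a ha => (hmem a ha).1)
    (fun a ha a' ha' hfa => hinj a ha a' ha' (f a) (hmem a ha).2 (hfa ▸ (hmem a' ha').2))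

/-- If a metric space `Z` is doubling at small scales, then `cdim Z < ∞`. -/
theorem statement8 {Z : Type*} [MetricSpace Z] (h : DoublingAtSmallScales Z) :
    cdim Z < ⊤ := by
  obtain ⟨N, r₀, hr₀, hd⟩ := h
  have hCD : CDimLE Z (N * N) := by
    refine ⟨1/4, by norm_num, by norm_num, 2 * r₀, by linarith, fun τ hτ hττ₀ => ?_⟩
    set r : ℝ := τ / 2 with hr_def
    have hr : 0 < r := by positivity
    have hε : 0 < r / 2 := by positivity
    obtain ⟨S, hSsep, hSnet⟩ := exists_net' (Z := Z) hε
    refine ⟨(fun x => Metric.ball x r) '' S, ?_, ?_, ?_, ?_, ?_⟩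
    · rintro U ⟨x, -, rfl⟩; exact Metric.isOpen_ball
    · ext z
      simp only [mem_sUnion, mem_univ, iff_true]
      obtain ⟨x, hx, hzx⟩ := hSnet z
      exact ⟨Metric.ball x r, ⟨x, hx, rfl⟩, Metric.mem_ball.mpr (by linarith)⟩
    · -- multiplicity
      rintro F hF ⟨z, hz⟩
      obtain ⟨s, hscard, hssub⟩ := double_cover' hr₀ hd hr (by
        simp only [hr_def]; linarith) z
      have hcard : F.card ≤ s.card := by
        refine card_le_of_assign'
          (P := fun U y => ∃ x ∈ S, U = Metric.ball x r ∧ x ∈ Metric.ball y (r/4)) ?_ ?_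
        · intro U hU
          obtain ⟨x, hxS, rfl⟩ := hF hU
          have hzx : dist z x < r := Metric.mem_ball.mp (hz _ hU)
          have hxz : x ∈ Metric.ball z r := Metric.mem_ball.mpr (by rwa [dist_comm])
          obtain ⟨y, hy, hxy⟩ := mem_iUnion₂.mp (hssub hxz)
          exact ⟨y, hy, x, hxS, rfl, hxy⟩
        · rintro U hU U' hU' y ⟨x, hxS, rfl, hxy⟩ ⟨x', hxS', rfl, hxy'⟩
          have hxx' : x = x' := by
            by_contra hne
            have h1 : dist x y < r / 4 := Metric.mem_ball.mp hxy
            have h2 : dist x' y < r / 4 := Metric.mem_ball.mp hxy'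
            have h3 : r / 2 ≤ dist x x' := hSsep x hxS x' hxS' hne
            have h4 : dist x x' ≤ dist x y + dist y x' := dist_triangle _ _ _
            rw [dist_comm y x'] at h4
            linarith
          rw [hxx']
      calc F.card ≤ s.card := hcard
        _ ≤ N * N := hscard
        _ ≤ N * N + 1 := Nat.le_succ _
    · -- mesh
      refine iSup₂_le ?_
      rintro U ⟨x, -, rfl⟩
      refine EMetric.diam_le fun a ha b hb => ?_
      rw [edist_dist]
      refine ENNReal.ofReal_le_ofReal ?_
      have ha' : dist a x < r := Metric.mem_ball.mp ha
      have hb' : dist b x < r := Metric.mem_ball.mp hb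
      have := dist_triangle a x b
      rw [dist_comm x b] at this
      simp only [hr_def] at *
      linarith
    · -- Lebesgue number
      refine le_iInf₂ fun z _ => ?_
      obtain ⟨x, hx, hzx⟩ := hSnet z
      refine le_trans ?_
        (le_iSup₂ (f := fun U (_ : U ∈ (fun x => Metric.ball x r) '' S) =>
          EMetric.infEdist z Uᶜ) (Metric.ball x r) ⟨x, hx, rfl⟩)
      refine Metric.le_infEDist.2 ?_
      intro w hw
      have hxw : r ≤ dist x w := by
        simpa [Metric.mem_ball, dist_comm] using hw
      rw [edist_dist]
      refine ENNReal.ofReal_le_ofReal ?_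
      have := dist_triangle x z w
      rw [dist_comm x z] at this
      simp only [hr_def] at *
      linarith
  have hle : cdim Z ≤ ((N * N : ℕ) : ℕ∞) := sInf_le ⟨N * N, rfl, hCD⟩
  exact lt_of_le_of_lt hle (WithTop.coe_lt_top _)

end BuyaloLebedeva
end
end

section
/- If a metric space X is asymptotically doubling, then its asymptotic capacity dimension is finite: Cdim X < ∞. -/
open Set Filter ENNReal

noncomputable section

namespace BuyaloLebedeva

/-- If a metric space `X` is asymptotically doubling, then `Cdim X < ∞`. -/
theorem statement9 {X : Type*} [MetricSpace X] (h : AsympDoubling X) :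
    aCdim X < ⊤ := by
  obtain ⟨N, R₀, hR₀, hdbl⟩ := h
  have hR₀pos : (0:ℝ) < R₀ := lt_trans one_pos hR₀
  have key : ACDimLE X (N * N) := by
    refine ⟨1/4, by norm_num, by norm_num, max (8*R₀) 2,
      lt_of_lt_of_le one_lt_two (le_max_right _ _), ?_⟩
    intro R hR
    set r : ℝ := R / 4 with hrdef
    have hR2 : (2:ℝ) ≤ R := le_trans (le_max_right _ _) hR
    have hR8 : 8 * R₀ ≤ R := le_trans (le_max_left _ _) hR
    have hrpos : 0 < r := by simp only [hrdef]; linarith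
    have hrR₀ : R₀ ≤ r := by simp only [hrdef]; linarith
    have hr2R₀ : R₀ ≤ r / 2 := by simp only [hrdef]; linarith
    -- a maximal r-separated set
    obtain ⟨S, hSmax⟩ := zorn_subset {A : Set X | A.Pairwise fun a b => r ≤ dist a b} (by
      intro c hc hchain
      refine ⟨⋃₀ c, ?_, fun s hs => subset_sUnion_of_mem hs⟩
      rintro a ⟨A, hA, haA⟩ b ⟨B, hB, hbB⟩ hab
      rcases hchain.total hA hB with hAB | hBA
      · exact hc hB (hAB haA) hbB hab
      · exact hc hA haA (hBA hbB) hab)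
    have hSsep : S.Pairwise fun a b => r ≤ dist a b := hSmax.prop
    have hnear : ∀ z : X, ∃ s ∈ S, dist z s < r := by
      intro z
      by_contra hcon
      push_neg at hcon
      have hz : z ∉ S := by
        intro hz
        have := hcon z hz
        rw [dist_self] at this
        linarith
      have hins : insert z S ∈ {A : Set X | A.Pairwise fun a b => r ≤ dist a b} := by
        rintro a (rfl | ha) b (rfl | hb) hab
        · exact absurd rfl hab
        · exact hcon b hb
        · rw [dist_comm]; exact hcon a ha
        · exact hSsep ha hb hab
      exact hz (hSmax.2 hins (subset_insert z S) (mem_insert z S))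
    refine ⟨(fun s => Metric.ball s (2*r)) '' S, ?_, ?_, ?_, ?_, ?_⟩
    · rintro U ⟨s, _, rfl⟩; exact Metric.isOpen_ball
    · apply eq_univ_of_forall
      intro z
      obtain ⟨s, hsS, hzs⟩ := hnear z
      exact ⟨Metric.ball s (2*r), mem_image_of_mem _ hsS,
        Metric.mem_ball.2 (by linarith)⟩
    · -- multiplicity
      intro F hF ⟨z, hz⟩
      classical
      obtain ⟨t, htc, htcov⟩ := hdbl r hrR₀ z
      choose t' ht'c ht'cov using fun y : X => hdbl (r/2) hr2R₀ y
      have h2 : 2 * (r/2) = r := by ring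
      set T : Finset (X × X) := t.biUnion fun y => (t' y).image fun y' => (y, y') with hT
      have hTcard : T.card ≤ N * N := by
        calc T.card ≤ ∑ y ∈ t, ((t' y).image fun y' => (y, y')).card :=
              Finset.card_biUnion_le
          _ ≤ ∑ _y ∈ t, N :=
              Finset.sum_le_sum fun y _ => le_trans Finset.card_image_le (ht'c y)
          _ = t.card * N := by rw [Finset.sum_const, smul_eq_mul]
          _ ≤ N * N := Nat.mul_le_mul_right N htc
      have key2 : ∀ U ∈ F, ∃ p : X × X, p ∈ T ∧ ∃ s, s ∈ S ∧
          U = Metric.ball s (2*r) ∧ s ∈ Metric.ball p.2 (r/2) := by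
        intro U hU
        obtain ⟨s, hsS, rfl⟩ := hF hU
        have hzU : z ∈ Metric.ball s (2*r) := hz _ hU
        have hsz : s ∈ Metric.ball z (2*r) := by
          rw [Metric.mem_ball] at hzU ⊢
          rw [dist_comm]; exact hzU
        have := htcov hsz
        simp only [mem_iUnion, exists_prop] at this
        obtain ⟨y, hyt, hsy⟩ := this
        rw [← h2] at hsy
        have := ht'cov y hsy
        simp only [mem_iUnion, exists_prop] at this
        obtain ⟨y', hy't, hsy'⟩ := this
        refine ⟨(y, y'), ?_, s, hsS, rfl, hsy'⟩
        rw [hT, Finset.mem_biUnion]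
        exact ⟨y, hyt, Finset.mem_image_of_mem _ hy't⟩
      have hXne : Nonempty X := ⟨z⟩
      choose! f hfT g hgS hUeq hgball using key2
      have hinj : Set.InjOn f (↑F : Set (Set X)) := by
        intro U hU V hV hUV
        have h1 := hgball U hU
        have h2b := hgball V hV
        rw [hUV] at h1
        rw [Metric.mem_ball] at h1 h2b
        have hd : dist (g U) (g V) < r := by
          have := dist_triangle (g U) (f V).2 (g V)
          rw [dist_comm (f V).2 (g V)] at *
          linarith [dist_triangle (g U) (f V).2 (g V), dist_comm (g V) (f V).2 ▸ h2b]
        have hgeq : g U = g V := by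
          by_contra hne
          exact absurd (hSsep (hgS U hU) (hgS V hV) hne) (not_le.2 hd)
        rw [hUeq U hU, hUeq V hV, hgeq]
      calc F.card ≤ T.card := Finset.card_le_card_of_injOn f hfT hinj
        _ ≤ N * N := hTcard
        _ ≤ N * N + 1 := Nat.le_succ _
    · -- mesh
      refine iSup₂_le ?_
      rintro U ⟨s, _, rfl⟩
      refine EMetric.diam_le fun x hx y hy => ?_
      rw [Metric.mem_ball] at hx hy
      rw [edist_dist]
      refine le_trans (ENNReal.ofReal_le_ofReal ?_) le_rfl
      have := dist_triangle x s y
      rw [dist_comm s y] at this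
      simp only [hrdef] at hx hy
      linarith
    · -- Lebesgue number
      refine le_iInf₂ fun z _ => ?_
      obtain ⟨s, hsS, hzs⟩ := hnear z
      refine le_iSup₂_of_le (Metric.ball s (2*r)) (mem_image_of_mem _ hsS) ?_
      refine EMetric.le_infEdist.2 fun w hw => ?_
      simp only [mem_compl_iff, Metric.mem_ball, not_lt] at hw
      rw [edist_dist]
      apply ENNReal.ofReal_le_ofReal
      have h1 : dist w s ≤ dist w z + dist z s := dist_triangle w z s
      have h2 : dist s z = dist z s := dist_comm s z
      have h3 : dist z w = dist w z := dist_comm z w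
      simp only [hrdef] at hzs hw ⊢
      linarith
  have hmem : ((N*N : ℕ) : ℕ∞) ∈ {k : ℕ∞ | ∃ m : ℕ, k = (m : ℕ∞) ∧ ACDimLE X m} :=
    ⟨N*N, rfl, key⟩
  exact (sInf_le hmem).trans_lt (Ne.lt_top (ENat.coe_ne_top (N*N)))

end BuyaloLebedeva
end
end

section
/- Let X, Y be bounded metric spaces such that for every ε > 0 there are a subset A ⊆ X and a homothety h_ε : A → Y whose image is ε-dense in Y, i.e. dist(y, h_ε(A)) < ε for every y ∈ Y. Then cdim X ≥ dim Y. -/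
open Set Filter ENNReal

noncomputable section

namespace BuyaloLebedeva

section
open scoped Classical


namespace BLAux

variable {Y : Type*}

/-- `A` meets the deep core of some set of the `j`-th family. -/
def Pmeet (𝒜 : ℕ → Set (Set Y)) (Dp : ℕ → Set Y → Set Y) (A : Set Y) (j : ℕ) : Prop :=
  ∃ B ∈ 𝒜 j, (A ∩ Dp j B).Nonempty


/-- greatest scale `j ≤ k - 1` whose deep cores `A` meets. -/
noncomputable def jsel (𝒜 : ℕ → Set (Set Y)) (Dp : ℕ → Set Y → Set Y) (k : ℕ) (A : Set Y) : ℕ :=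
  Nat.findGreatest (Pmeet 𝒜 Dp A) (k - 1)


noncomputable def Bsel (𝒜 : ℕ → Set (Set Y)) (Dp : ℕ → Set Y → Set Y) (k : ℕ) (A : Set Y) :
    Set Y :=
  if h : Pmeet 𝒜 Dp A (jsel 𝒜 Dp k A) then h.choose else ∅

lemma jsel_lt (𝒜 : ℕ → Set (Set Y)) (Dp : ℕ → Set Y → Set Y) {k : ℕ} (A : Set Y)
    (h : ∃ j, j < k ∧ Pmeet 𝒜 Dp A j) : jsel 𝒜 Dp k A < k := by
  obtain ⟨j, hj, _⟩ := h
  exact lt_of_le_of_lt (Nat.findGreatest_le _) (by omega)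


lemma jsel_Pmeet (𝒜 : ℕ → Set (Set Y)) (Dp : ℕ → Set Y → Set Y) {k : ℕ} (A : Set Y)
    (h : ∃ j, j < k ∧ Pmeet 𝒜 Dp A j) : Pmeet 𝒜 Dp A (jsel 𝒜 Dp k A) := by
  obtain ⟨j, hj, hP⟩ := h
  exact Nat.findGreatest_spec (by omega) hP


lemma le_jsel (𝒜 : ℕ → Set (Set Y)) (Dp : ℕ → Set Y → Set Y) {k j : ℕ} (A : Set Y)
    (hj : j < k) (hP : Pmeet 𝒜 Dp A j) : j ≤ jsel 𝒜 Dp k A :=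
  Nat.le_findGreatest (by omega) hP

lemma Bsel_spec (𝒜 : ℕ → Set (Set Y)) (Dp : ℕ → Set Y → Set Y) {k : ℕ} (A : Set Y)
    (h : ∃ j, j < k ∧ Pmeet 𝒜 Dp A j) :
    Bsel 𝒜 Dp k A ∈ 𝒜 (jsel 𝒜 Dp k A) ∧ (A ∩ Dp (jsel 𝒜 Dp k A) (Bsel 𝒜 Dp k A)).Nonempty := by
  have hP := jsel_Pmeet 𝒜 Dp A h
  rw [Bsel, dif_pos hP]
  exact hP.choose_spec

/-- Absorption target. -/
noncomputable def Tgt (𝒜 : ℕ → Set (Set Y)) (Dp : ℕ → Set Y → Set Y) : ℕ → Set Y → ℕ × Set Y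
  | k, A =>
    if h : ∃ j, j < k ∧ Pmeet 𝒜 Dp A j then
      have : jsel 𝒜 Dp k A < k := jsel_lt 𝒜 Dp A h
      Tgt 𝒜 Dp (jsel 𝒜 Dp k A) (Bsel 𝒜 Dp k A)
    else (k, A)
  termination_by k _ => k

lemma Tgt_pos (𝒜 : ℕ → Set (Set Y)) (Dp : ℕ → Set Y → Set Y) {k : ℕ} (A : Set Y)
    (h : ∃ j, j < k ∧ Pmeet 𝒜 Dp A j) :
    Tgt 𝒜 Dp k A = Tgt 𝒜 Dp (jsel 𝒜 Dp k A) (Bsel 𝒜 Dp k A) := by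
  rw [Tgt]; exact dif_pos h

lemma Tgt_neg (𝒜 : ℕ → Set (Set Y)) (Dp : ℕ → Set Y → Set Y) {k : ℕ} (A : Set Y)
    (h : ¬ ∃ j, j < k ∧ Pmeet 𝒜 Dp A j) :
    Tgt 𝒜 Dp k A = (k, A) := by
  rw [Tgt]; exact dif_neg h

section

variable (𝒜 : ℕ → Set (Set Y)) (Dp : ℕ → Set Y → Set Y)
variable (Hsub : ∀ k A j B, A ∈ 𝒜 k → j < k → B ∈ 𝒜 j → (A ∩ Dp j B).Nonempty → A ⊆ B)

include Hsub in
lemma Tgt_spec : ∀ k, ∀ A ∈ 𝒜 k,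
    (Tgt 𝒜 Dp k A).1 ≤ k ∧ (Tgt 𝒜 Dp k A).2 ∈ 𝒜 (Tgt 𝒜 Dp k A).1 ∧ A ⊆ (Tgt 𝒜 Dp k A).2 ∧
      ∀ j < (Tgt 𝒜 Dp k A).1, ∀ B ∈ 𝒜 j, ((Tgt 𝒜 Dp k A).2 ∩ Dp j B) = ∅ := by
  intro k
  induction k using Nat.strong_induction_on with
  | _ k IH =>
    intro A hA
    by_cases h : ∃ j, j < k ∧ Pmeet 𝒜 Dp A j
    · have hjk := jsel_lt 𝒜 Dp A h
      obtain ⟨hB, hne⟩ := Bsel_spec 𝒜 Dp A h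
      have hsub : A ⊆ Bsel 𝒜 Dp k A := Hsub k A _ _ hA hjk hB hne
      have := IH _ hjk (Bsel 𝒜 Dp k A) hB
      rw [Tgt_pos 𝒜 Dp A h]
      exact ⟨this.1.trans hjk.le, this.2.1, hsub.trans this.2.2.1, this.2.2.2⟩
    · rw [Tgt_neg 𝒜 Dp A h]
      refine ⟨le_rfl, hA, subset_rfl, ?_⟩
      intro j hj B hB
      by_contra hne
      exact h ⟨j, hj, B, hB, Set.nonempty_iff_ne_empty.mpr hne⟩

include Hsub in
lemma Tgt_cross : ∀ k, ∀ A z κ S, A ∈ 𝒜 k → z ∈ A → κ ≤ k → S ∈ 𝒜 κ → z ∈ Dp κ S →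
    ∃ C ∈ 𝒜 κ, z ∈ C ∧ Tgt 𝒜 Dp κ C = Tgt 𝒜 Dp k A := by
  intro k
  induction k using Nat.strong_induction_on with
  | _ k IH =>
    intro A z κ S hA hzA hκk hS hzD
    rcases eq_or_lt_of_le hκk with rfl | hκlt
    · exact ⟨A, hA, hzA, rfl⟩
    · have h : ∃ j, j < k ∧ Pmeet 𝒜 Dp A j := ⟨κ, hκlt, S, hS, ⟨z, hzA, hzD⟩⟩
      have hjk := jsel_lt 𝒜 Dp A h
      have hκj : κ ≤ jsel 𝒜 Dp k A := le_jsel 𝒜 Dp A hκlt ⟨S, hS, ⟨z, hzA, hzD⟩⟩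
      obtain ⟨hB, hne⟩ := Bsel_spec 𝒜 Dp A h
      have hsub : A ⊆ Bsel 𝒜 Dp k A := Hsub k A _ _ hA hjk hB hne
      obtain ⟨C, hC, hzC, hTC⟩ := IH _ hjk (Bsel 𝒜 Dp k A) z κ S hB (hsub hzA) hκj hS hzD
      exact ⟨C, hC, hzC, hTC.trans (Tgt_pos 𝒜 Dp A h).symm⟩

end

end BLAux

end


set_option maxHeartbeats 1000000 in
theorem cdim_transfer {X Y : Type*} [MetricSpace X] [MetricSpace Y]
    (hX : Bornology.IsBounded (univ : Set X))
    (h : ∀ ε : ℝ, 0 < ε → ∃ A : Set X, ∃ f : X → Y, ∃ lam : ℝ, 0 < lam ∧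
      (∀ a ∈ A, ∀ b ∈ A, dist (f a) (f b) = lam * dist a b) ∧
      ∀ y : Y, ∃ a ∈ A, dist y (f a) < ε)
    {m : ℕ} (hC : CDimLE X m) : CDimLE Y m := by
  classical
  by_cases hsub : ∀ y y' : Y, y = y'
  · -- subsingleton case
    refine ⟨1/2, by norm_num, by norm_num, 1, one_pos, fun τ hτ0 _ => ?_⟩
    refine ⟨{univ}, ?_, ?_, ?_, ?_, ?_⟩
    · rintro U rfl; exact isOpen_univ
    · simp
    · intro F hF _
      have hF' : F ⊆ {(univ : Set Y)} := fun x hx => by simpa using hF hx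
      calc F.card ≤ ({(univ : Set Y)} : Finset (Set Y)).card := Finset.card_le_card hF'
        _ = 1 := Finset.card_singleton _
        _ ≤ m + 1 := by omega
    · have hsub' : (univ : Set Y).Subsingleton := fun a _ b _ => hsub a b
      rw [mesh]
      simp only [mem_singleton_iff, iSup_iSup_eq_left]
      rw [show EMetric.diam (univ : Set Y) = 0 from EMetric.diam_subsingleton hsub']
      exact zero_le
    · rw [lebesgue]
      refine le_iInf₂ fun z _ => ?_
      refine le_trans le_top ?_
      refine le_biSup _ (mem_singleton _)  |>.trans' ?_
      rw [compl_univ, show EMetric.infEdist z (∅ : Set Y) = ⊤ from EMetric.infEdist_empty]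
  · -- main case
    push_neg at hsub
    obtain ⟨y₁, y₂, hy12⟩ := hsub
    obtain ⟨δ, hδ0, hδ1, τ₀, hτ₀, hcov⟩ := hC
    set DY : ℝ := dist y₁ y₂ with hDYdef
    have hDY : 0 < DY := dist_pos.mpr hy12
    set DX : ℝ := Metric.diam (univ : Set X) with hDXdef
    have hDX0 : 0 ≤ DX := Metric.diam_nonneg
    -- a general lower bound for the coefficients
    have hlam_lb : ∀ ε : ℝ, 0 < ε → ε ≤ DY/8 → ∀ (A : Set X) (f : X → Y) (lam : ℝ), 0 < lam →
        (∀ a ∈ A, ∀ b ∈ A, dist (f a) (f b) = lam * dist a b) →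
        (∀ y : Y, ∃ a ∈ A, dist y (f a) < ε) → DY/2 ≤ lam * DX := by
      intro ε hε0 hε8 A f lam hlam0 hiso hdense
      obtain ⟨a₁, ha₁, hya₁⟩ := hdense y₁
      obtain ⟨a₂, ha₂, hya₂⟩ := hdense y₂
      have htri : DY ≤ dist y₁ (f a₁) + dist (f a₁) (f a₂) + dist (f a₂) y₂ := dist_triangle4 _ _ _ _
      have hd12 : DY/2 ≤ dist (f a₁) (f a₂) := by
        have := dist_comm (f a₂) y₂
        nlinarith [dist_comm (f a₂) y₂, hya₂, hya₁]
      rw [hiso a₁ ha₁ a₂ ha₂] at hd12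
      have hle : dist a₁ a₂ ≤ DX := Metric.dist_le_diam_of_mem hX (mem_univ _) (mem_univ _)
      nlinarith [hlam0]
    have hDXpos : 0 < DX := by
      obtain ⟨A, f, lam, hlam0, hiso, hdense⟩ := h (DY/8) (by linarith)
      have := hlam_lb (DY/8) (by linarith) le_rfl A f lam hlam0 hiso hdense
      nlinarith
    set lamMin : ℝ := DY / (2 * DX) with hlamMindef
    have hlamMin0 : 0 < lamMin := by positivity
    have hlamMin_le : ∀ ε : ℝ, 0 < ε → ε ≤ DY/8 → ∀ (A : Set X) (f : X → Y) (lam : ℝ), 0 < lam →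
        (∀ a ∈ A, ∀ b ∈ A, dist (f a) (f b) = lam * dist a b) →
        (∀ y : Y, ∃ a ∈ A, dist y (f a) < ε) → lamMin ≤ lam := by
      intro ε hε0 hε8 A f lam hlam0 hiso hdense
      have := hlam_lb ε hε0 hε8 A f lam hlam0 hiso hdense
      rw [hlamMindef, div_le_iff₀ (by positivity)]
      nlinarith
    refine ⟨δ/16, by linarith, by linarith, 2 * (lamMin * τ₀), by positivity, ?_⟩
    intro τY hτY0 hτYle
    set σ : ℝ := τY / 2 with hσdef
    have hσ0 : 0 < σ := by positivity
    have hσle : σ ≤ lamMin * τ₀ := by rw [hσdef]; linarith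
    have hε0 : 0 < min (δ*σ/16) (DY/8) := lt_min (by positivity) (by positivity)
    obtain ⟨A, f, lam, hlam0, hiso, hdense⟩ := h _ hε0
    have hεδ : min (δ*σ/16) (DY/8) ≤ δ*σ/16 := min_le_left _ _
    have hlamlb : lamMin ≤ lam :=
      hlamMin_le _ hε0 (min_le_right _ _) A f lam hlam0 hiso hdense
    set τ : ℝ := σ / lam with hτdef
    have hτ0 : 0 < τ := by positivity
    have hττ₀ : τ ≤ τ₀ := by
      rw [hτdef, div_le_iff₀ hlam0]
      nlinarith
    obtain ⟨𝒰, hUopen, hUcover, hUmult, hUmesh, hUleb⟩ := hcov τ hτ0 hττ₀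
    have hlamτ : lam * τ = σ := by rw [hτdef]; field_simp
    -- deep Lebesgue witness in X
    have hlebat : ∀ a : X, ∃ U ∈ 𝒰, ENNReal.ofReal (δ * τ / 2) < EMetric.infEdist a Uᶜ := by
      intro a
      have h1 : ENNReal.ofReal (δ * τ) ≤ ⨆ U ∈ 𝒰, EMetric.infEdist a Uᶜ :=
        le_trans hUleb (iInf₂_le a (mem_univ a))
      have h2 : ENNReal.ofReal (δ * τ / 2) < ENNReal.ofReal (δ * τ) := by
        rw [ENNReal.ofReal_lt_ofReal_iff (by positivity)]
        nlinarith
      have h3 := lt_of_lt_of_le h2 h1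
      rw [lt_iSup_iff] at h3
      obtain ⟨U, h3⟩ := h3
      rw [lt_iSup_iff] at h3
      obtain ⟨hU, h3⟩ := h3
      exact ⟨U, hU, h3⟩
    set Vmap : Set X → Set Y := fun U =>
      ⋃ (a : X) (_ : a ∈ A ∧ ENNReal.ofReal (δ*τ/2) < EMetric.infEdist a Uᶜ),
        Metric.ball (f a) (δ*σ/4) with hVdef
    have hdeep_subU : ∀ (U : Set X) (a : X),
        ENNReal.ofReal (δ*τ/2) < EMetric.infEdist a Uᶜ → a ∈ U := by
      intro U a ha
      by_contra haU
      have haU' : a ∈ Uᶜ := haU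
      rw [show EMetric.infEdist a Uᶜ = 0 from EMetric.infEdist_zero_of_mem haU'] at ha
      exact absurd ha (by simp)
    refine ⟨Vmap '' 𝒰, ?_, ?_, ?_, ?_, ?_⟩
    · rintro V ⟨U, hU, rfl⟩
      exact isOpen_iUnion fun a => isOpen_iUnion fun _ => Metric.isOpen_ball
    · rw [eq_univ_iff_forall]
      intro z
      obtain ⟨a, haA, hza⟩ := hdense z
      obtain ⟨U, hU, hdeep⟩ := hlebat a
      refine ⟨Vmap U, mem_image_of_mem _ hU, ?_⟩
      refine mem_iUnion.mpr ⟨a, mem_iUnion.mpr ⟨⟨haA, hdeep⟩, ?_⟩⟩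
      rw [Metric.mem_ball]
      calc dist z (f a) < min (δ*σ/16) (DY/8) := hza
        _ ≤ δ*σ/16 := hεδ
        _ < δ*σ/4 := by nlinarith
    · -- multiplicity
      intro F hF ⟨z, hz⟩
      rcases F.eq_empty_or_nonempty with rfl | hFne
      · simp
      have key : ∀ C ∈ F, ∃ (U : Set X) (a : X), U ∈ 𝒰 ∧ C = Vmap U ∧ a ∈ A ∧
          ENNReal.ofReal (δ*τ/2) < EMetric.infEdist a Uᶜ ∧ dist z (f a) < δ*σ/4 := by
        intro C hC
        obtain ⟨U, hU, rfl⟩ := hF hC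
        have hzC := hz _ hC
        rw [hVdef] at hzC
        simp only [mem_iUnion] at hzC
        obtain ⟨a, ⟨haA, hdeep⟩, hball⟩ := hzC
        exact ⟨U, a, hU, rfl, haA, hdeep, Metric.mem_ball.mp hball⟩
      choose Uf af hU1 hU2 hU3 hU4 hU5 using key
      obtain ⟨C₀, hC₀⟩ := hFne
      have hcommon : ∀ (C) (hC : C ∈ F), af C₀ hC₀ ∈ Uf C hC := by
        intro C hC
        have hdf : dist (f (af C₀ hC₀)) (f (af C hC)) < δ*σ/2 := by
          calc dist (f (af C₀ hC₀)) (f (af C hC))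
              ≤ dist (f (af C₀ hC₀)) z + dist z (f (af C hC)) := dist_triangle _ z _
            _ < δ*σ/4 + δ*σ/4 := by
                have := hU5 C₀ hC₀
                rw [dist_comm] at this
                exact add_lt_add this (hU5 C hC)
            _ = δ*σ/2 := by ring
        rw [hiso _ (hU3 C₀ hC₀) _ (hU3 C hC)] at hdf
        have hdd : dist (af C₀ hC₀) (af C hC) < δ * τ / 2 := by
          rw [hτdef, show δ * (σ / lam) / 2 = (δ * σ / 2) / lam by field_simp]
          rw [lt_div_iff₀ hlam0]
          nlinarith [hdf]
        by_contra hnot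
        have hnot' : af C₀ hC₀ ∈ (Uf C hC)ᶜ := hnot
        have h1 : EMetric.infEdist (af C hC) (Uf C hC)ᶜ ≤ edist (af C hC) (af C₀ hC₀) :=
          EMetric.infEdist_le_edist_of_mem hnot'
        rw [edist_dist, dist_comm] at h1
        have h2 : ENNReal.ofReal (dist (af C₀ hC₀) (af C hC)) < ENNReal.ofReal (δ*τ/2) := by
          rw [ENNReal.ofReal_lt_ofReal_iff (by positivity)]
          exact hdd
        exact absurd (h1.trans h2.le) (not_le.mpr (hU4 C hC))
      have hinj : Set.InjOn (fun x : {x // x ∈ F} => Uf x.1 x.2) ↑F.attach := by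
        intro x1 _ x2 _ heq
        have heq' : Uf x1.1 x1.2 = Uf x2.1 x2.2 := heq
        have : x1.1 = x2.1 := by rw [hU2 x1.1 x1.2, hU2 x2.1 x2.2, heq']
        exact Subtype.ext this
      have hcard : (F.attach.image fun x => Uf x.1 x.2).card = F.card := by
        rw [Finset.card_image_of_injOn hinj, Finset.card_attach]
      rw [← hcard]
      refine hUmult _ ?_ ⟨af C₀ hC₀, ?_⟩
      · intro U hU
        obtain ⟨x, _, rfl⟩ := Finset.mem_image.mp hU
        exact hU1 x.1 x.2
      · intro U hU
        obtain ⟨x, _, rfl⟩ := Finset.mem_image.mp hU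
        exact hcommon x.1 x.2
    · -- mesh
      rw [mesh]
      refine iSup₂_le ?_
      rintro V ⟨U, hU, rfl⟩
      refine EMetric.diam_le ?_
      intro x hx y hy
      rw [hVdef] at hx hy
      simp only [mem_iUnion] at hx hy
      obtain ⟨a, ⟨haA, hdeepa⟩, hxball⟩ := hx
      obtain ⟨b, ⟨hbA, hdeepb⟩, hyball⟩ := hy
      have haU : a ∈ U := hdeep_subU U a hdeepa
      have hbU : b ∈ U := hdeep_subU U b hdeepb
      have hab : dist a b ≤ τ := by
        have h1 : edist a b ≤ EMetric.diam U := EMetric.edist_le_diam_of_mem haU hbU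
        have h2 : EMetric.diam U ≤ ENNReal.ofReal τ :=
          le_trans (le_biSup (fun U => EMetric.diam U) hU) hUmesh
        rw [edist_dist] at h1
        exact (ENNReal.ofReal_le_ofReal_iff hτ0.le).mp (h1.trans h2)
      have hxy : dist x y ≤ τY := by
        have h3 : dist x y ≤ dist x (f a) + dist (f a) (f b) + dist (f b) y := dist_triangle4 _ _ _ _
        rw [hiso a haA b hbA] at h3
        rw [Metric.mem_ball] at hxball hyball
        have h4 : lam * dist a b ≤ lam * τ := mul_le_mul_of_nonneg_left hab hlam0.le
        rw [hlamτ] at h4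
        have h5 : dist (f b) y ≤ δ*σ/4 := by rw [dist_comm]; exact hyball.le
        have hτY : τY = 2 * σ := by rw [hσdef]; ring
        have hδσ : δ * σ ≤ σ := by nlinarith
        linarith
      rw [edist_dist]
      exact ENNReal.ofReal_le_ofReal hxy
    · -- Lebesgue
      rw [lebesgue]
      refine le_iInf₂ fun z _ => ?_
      obtain ⟨a, haA, hza⟩ := hdense z
      obtain ⟨U, hU, hdeep⟩ := hlebat a
      have hball : Metric.ball (f a) (δ*σ/4) ⊆ Vmap U := by
        rw [hVdef]
        exact subset_iUnion₂ (s := fun (a : X)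
          (_ : a ∈ A ∧ ENNReal.ofReal (δ*τ/2) < EMetric.infEdist a Uᶜ) =>
            Metric.ball (f a) (δ*σ/4)) a ⟨haA, hdeep⟩
      have hinf : ENNReal.ofReal (δ/16 * τY) ≤ EMetric.infEdist z (Vmap U)ᶜ := by
        refine EMetric.le_infEdist.mpr ?_
        intro w hw
        have hwball : w ∉ Metric.ball (f a) (δ*σ/4) := fun hmem => hw (hball hmem)
        rw [Metric.mem_ball, not_lt] at hwball
        have hzw : δ/16 * τY ≤ dist z w := by
          have h1 : dist w (f a) ≤ dist w z + dist z (f a) := dist_triangle _ _ _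
          have h2 : dist z (f a) < δ*σ/16 := lt_of_lt_of_le hza hεδ
          have heq : δ/16 * τY = δ * σ / 8 := by rw [hσdef]; ring
          rw [heq, dist_comm z w]
          linarith
        rw [edist_dist]
        exact ENNReal.ofReal_le_ofReal hzw
      refine le_trans hinf ?_
      exact le_biSup (fun V => EMetric.infEdist z Vᶜ) (mem_image_of_mem _ hU)



open BLAux

theorem cdim_to_topdim {Y : Type*} [MetricSpace Y] {m : ℕ} (hC : CDimLE Y m) :
    TopDimLE Y m := by
  classical
  obtain ⟨δ, hδ0, hδ1, τ₀, hτ₀, hcov⟩ := hC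
  intro 𝒲 hWopen hWcover
  -- scales
  set σ : ℕ → ℝ := fun k => min τ₀ 8⁻¹ * (δ / 8) ^ k with hσdef
  have hc₀ : (0:ℝ) < min τ₀ 8⁻¹ := lt_min hτ₀ (by norm_num)
  have hr0 : (0:ℝ) < δ / 8 := by linarith
  have hr1 : δ / 8 < 1 := by linarith
  have hσpos : ∀ k, 0 < σ k := fun k => mul_pos hc₀ (pow_pos hr0 k)
  have hστ : ∀ k, σ k ≤ τ₀ := by
    intro k
    calc σ k ≤ min τ₀ 8⁻¹ * 1 := by
          apply mul_le_mul_of_nonneg_left _ hc₀.le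
          exact pow_le_one₀ hr0.le hr1.le
      _ ≤ τ₀ := by rw [mul_one]; exact min_le_left _ _
  have hσsucc : ∀ k, σ (k + 1) = δ * σ k / 8 := by
    intro k; simp only [hσdef, pow_succ]; ring
  have hσmono : ∀ {j k : ℕ}, j ≤ k → σ k ≤ σ j := by
    intro j k hjk
    apply mul_le_mul_of_nonneg_left _ hc₀.le
    exact pow_le_pow_of_le_one hr0.le hr1.le hjk
  -- covers at every scale
  choose 𝒱 hVopen hVcover hVmult hVmesh hVleb using fun k => hcov (σ k) (hσpos k) (hστ k)
  -- local Lebesgue function of 𝒲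
  set ℒ : Y → ℝ≥0∞ := fun y => min (⨆ W ∈ 𝒲, EMetric.infEdist y Wᶜ) 1 with hℒdef
  -- active families and deep cores
  set 𝒜 : ℕ → Set (Set Y) :=
    fun k => {A | A ∈ 𝒱 k ∧ ∃ y ∈ A, ENNReal.ofReal (4 * σ k) < ℒ y} with h𝒜def
  set Dp : ℕ → Set Y → Set Y :=
    fun k B => {y | ENNReal.ofReal (δ * σ k / 2) < EMetric.infEdist y Bᶜ} with hDdef
  have hDsub : ∀ k B, Dp k B ⊆ B := by
    intro k B y hy
    by_contra hyB
    have h0 : EMetric.infEdist y Bᶜ = 0 := EMetric.infEdist_zero_of_mem hyB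
    rw [hDdef] at hy
    simp only [mem_setOf_eq, h0] at hy
    exact absurd hy (by simp)
  have hdiam : ∀ k A, A ∈ 𝒱 k → EMetric.diam A ≤ ENNReal.ofReal (σ k) := by
    intro k A hA
    refine le_trans ?_ (hVmesh k)
    exact le_biSup (fun U => EMetric.diam U) hA
  -- absorption inclusion
  have Hsub : ∀ k A j B, A ∈ 𝒜 k → j < k → B ∈ 𝒜 j → (A ∩ Dp j B).Nonempty → A ⊆ B := by
    intro k A j B hA hjk hB ⟨w, hwA, hwD⟩ x hxA
    by_contra hxB
    have hxB' : x ∈ Bᶜ := hxB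
    have h1 : EMetric.infEdist w Bᶜ ≤ edist w x := EMetric.infEdist_le_edist_of_mem hxB'
    have h2 : edist w x ≤ EMetric.diam A := EMetric.edist_le_diam_of_mem hwA hxA
    have h3 : σ k ≤ δ * σ j / 2 := by
      have := hσmono (Nat.succ_le_of_lt hjk)
      rw [hσsucc j] at this
      nlinarith [hσpos j]
    have h4 : EMetric.infEdist w Bᶜ ≤ ENNReal.ofReal (δ * σ j / 2) :=
      h1.trans (h2.trans ((hdiam k A hA.1).trans (ENNReal.ofReal_le_ofReal h3)))
    rw [hDdef] at hwD
    exact absurd h4 (not_le.mpr hwD)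
  -- active sets are contained in members of 𝒲
  have hWact : ∀ k A, A ∈ 𝒜 k → ∃ W ∈ 𝒲, A ⊆ W := by
    intro k A hA
    obtain ⟨hAV, y, hyA, hy⟩ := hA
    have hy' : ENNReal.ofReal (4 * σ k) < ⨆ W ∈ 𝒲, EMetric.infEdist y Wᶜ :=
      lt_of_lt_of_le hy (min_le_left _ _)
    rw [lt_iSup_iff] at hy'
    obtain ⟨W, hy'⟩ := hy'
    rw [lt_iSup_iff] at hy'
    obtain ⟨hW, hy'⟩ := hy'
    refine ⟨W, hW, fun x hxA => ?_⟩
    by_contra hxW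
    have hxW' : x ∈ Wᶜ := hxW
    have h1 : EMetric.infEdist y Wᶜ ≤ EMetric.diam A :=
      (EMetric.infEdist_le_edist_of_mem hxW').trans (EMetric.edist_le_diam_of_mem hyA hxA)
    have h2 : EMetric.infEdist y Wᶜ ≤ ENNReal.ofReal (4 * σ k) :=
      h1.trans ((hdiam k A hAV).trans (ENNReal.ofReal_le_ofReal (by nlinarith [hσpos k])))
    exact absurd h2 (not_le.mpr hy')
  -- Lebesgue witness at every point and scale
  have hlebat : ∀ k (z : Y), ∃ U ∈ 𝒱 k, ENNReal.ofReal (δ * σ k / 2) < EMetric.infEdist z Uᶜ := by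
    intro k z
    have h1 : ENNReal.ofReal (δ * σ k) ≤ ⨆ U ∈ 𝒱 k, EMetric.infEdist z Uᶜ := by
      refine le_trans (hVleb k) ?_
      exact iInf₂_le z (mem_univ z)
    have h2 : ENNReal.ofReal (δ * σ k / 2) < ENNReal.ofReal (δ * σ k) := by
      rw [ENNReal.ofReal_lt_ofReal_iff (by positivity)]
      nlinarith [hσpos k]
    have h3 := lt_of_lt_of_le h2 h1
    rw [lt_iSup_iff] at h3
    obtain ⟨U, h3⟩ := h3
    rw [lt_iSup_iff] at h3
    obtain ⟨hU, h3⟩ := h3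
    exact ⟨U, hU, h3⟩
  -- positivity of ℒ
  have hℒpos : ∀ z : Y, 0 < ℒ z := by
    intro z
    have hz : z ∈ ⋃₀ 𝒲 := by rw [hWcover]; exact mem_univ z
    obtain ⟨W, hW, hzW⟩ := hz
    have h1 : 0 < EMetric.infEdist z Wᶜ := by
      rw [pos_iff_ne_zero]
      intro h0
      have := (EMetric.mem_iff_infEdist_zero_of_closed (hWopen W hW).isClosed_compl).mpr h0
      exact this hzW
    refine lt_min ?_ zero_lt_one
    refine lt_of_lt_of_le h1 ?_
    exact le_biSup (fun W => EMetric.infEdist z Wᶜ) hW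
  -- small scales: every point is eventually active
  have hℒscale : ∀ z : Y, ∃ k, ENNReal.ofReal (4 * σ k) < ℒ z := by
    intro z
    have hne : ℒ z ≠ ⊤ := by
      have : ℒ z ≤ 1 := min_le_right _ _
      exact ne_top_of_le_ne_top one_ne_top this
    have hpos : 0 < (ℒ z).toReal := ENNReal.toReal_pos (hℒpos z).ne' hne
    obtain ⟨n, hn⟩ := exists_pow_lt_of_lt_one
      (show (0:ℝ) < (ℒ z).toReal / (4 * min τ₀ 8⁻¹) by positivity) hr1
    refine ⟨n, ?_⟩
    have h4 : 4 * σ n < (ℒ z).toReal := by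
      have : (δ/8) ^ n * (4 * min τ₀ 8⁻¹) < (ℒ z).toReal := by
        rw [← lt_div_iff₀ (by positivity)]
        exact hn
      calc 4 * σ n = (δ/8)^n * (4 * min τ₀ 8⁻¹) := by rw [hσdef]; ring
        _ < (ℒ z).toReal := this
    calc ENNReal.ofReal (4 * σ n) < ENNReal.ofReal ((ℒ z).toReal) := by
          rw [ENNReal.ofReal_lt_ofReal_iff hpos]; exact h4
      _ = ℒ z := ENNReal.ofReal_toReal hne
  -- members
  have hTspec := BLAux.Tgt_spec 𝒜 Dp Hsub
  have hTcross := BLAux.Tgt_cross 𝒜 Dp Hsub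
  set M : ℕ × Set Y → Set Y :=
    fun p => ⋃ (κ : ℕ) (S : Set Y) (_ : S ∈ 𝒜 κ ∧ BLAux.Tgt 𝒜 Dp κ S = p), Dp κ S with hMdef
  set 𝒞 : Set (Set Y) := {C | ∃ p : ℕ × Set Y, p.2 ∈ 𝒜 p.1 ∧ C = M p} with h𝒞def
  have hMsub : ∀ p : ℕ × Set Y, M p ⊆ p.2 := by
    intro p
    refine iUnion_subset fun κ => iUnion_subset fun S => iUnion_subset fun hS => ?_
    refine (hDsub κ S).trans ?_
    have := (hTspec κ S hS.1).2.2.1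
    rw [hS.2] at this
    exact this
  refine ⟨𝒞, ?_, ?_, ?_, ?_⟩
  · -- open
    rintro C ⟨p, _, rfl⟩
    refine isOpen_iUnion fun κ => isOpen_iUnion fun S => isOpen_iUnion fun _ => ?_
    exact isOpen_lt continuous_const EMetric.continuous_infEdist
  · -- covers
    rw [eq_univ_iff_forall]
    intro z
    obtain ⟨k, hk⟩ := hℒscale z
    obtain ⟨U, hU, hdeep⟩ := hlebat k z
    have hzD : z ∈ Dp k U := by rw [hDdef]; exact hdeep
    have hUA : U ∈ 𝒜 k := ⟨hU, z, hDsub k U hzD, hk⟩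
    refine ⟨M (BLAux.Tgt 𝒜 Dp k U), ⟨BLAux.Tgt 𝒜 Dp k U, (hTspec k U hUA).2.1, rfl⟩, ?_⟩
    exact mem_iUnion.mpr ⟨k, mem_iUnion.mpr ⟨U, mem_iUnion.mpr ⟨⟨hUA, rfl⟩, hzD⟩⟩⟩
  · -- refines 𝒲
    rintro C ⟨p, hp, rfl⟩
    obtain ⟨W, hW, hsub⟩ := hWact p.1 p.2 hp
    exact ⟨W, hW, (hMsub p).trans hsub⟩
  · -- multiplicity
    intro F hF ⟨z, hz⟩
    rcases F.eq_empty_or_nonempty with rfl | hFne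
    · simp
    have key : ∀ C ∈ F, ∃ (p : ℕ × Set Y) (κ : ℕ) (S : Set Y),
        p.2 ∈ 𝒜 p.1 ∧ C = M p ∧ S ∈ 𝒜 κ ∧ BLAux.Tgt 𝒜 Dp κ S = p ∧ z ∈ Dp κ S := by
      intro C hC
      obtain ⟨p, hp, rfl⟩ := hF hC
      have hzC := hz _ hC
      rw [hMdef] at hzC
      simp only [mem_iUnion] at hzC
      obtain ⟨κ, S, ⟨hS, hT⟩, hzD⟩ := hzC
      exact ⟨p, κ, S, hp, rfl, hS, hT, hzD⟩
    choose pf κf Sf hp1 hp2 hp3 hp4 hp5 using key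
    -- minimal witness scale
    obtain ⟨x₀, -, hx₀min⟩ := Finset.exists_min_image F.attach (fun x => κf x.1 x.2)
      (Finset.attach_nonempty_iff.mpr hFne)
    have hκsle : ∀ (C) (hC : C ∈ F), κf x₀.1 x₀.2 ≤ κf C hC := by
      intro C hC
      exact hx₀min ⟨C, hC⟩ (Finset.mem_attach _ _)
    have hSs : Sf x₀.1 x₀.2 ∈ 𝒜 (κf x₀.1 x₀.2) := hp3 x₀.1 x₀.2
    have hzDs : z ∈ Dp (κf x₀.1 x₀.2) (Sf x₀.1 x₀.2) := hp5 x₀.1 x₀.2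
    -- crossing map
    have Φdata : ∀ (C) (hC : C ∈ F), ∃ C', C' ∈ 𝒜 (κf x₀.1 x₀.2) ∧ z ∈ C' ∧
        BLAux.Tgt 𝒜 Dp (κf x₀.1 x₀.2) C' = pf C hC := by
      intro C hC
      obtain ⟨C', hC1, hC2, hC3⟩ := hTcross (κf C hC) (Sf C hC) z (κf x₀.1 x₀.2) (Sf x₀.1 x₀.2)
        (hp3 C hC) (hDsub _ _ (hp5 C hC)) (hκsle C hC) hSs hzDs
      exact ⟨C', hC1, hC2, hC3.trans (hp4 C hC)⟩
    choose Φ hΦA hΦz hΦT using Φdata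
    set G : Finset (Set Y) := F.attach.image fun x => Φ x.1 x.2 with hGdef
    have hinj : Set.InjOn (fun x : {x // x ∈ F} => Φ x.1 x.2) ↑F.attach := by
      intro x1 _ x2 _ heq
      have heq' : Φ x1.1 x1.2 = Φ x2.1 x2.2 := heq
      have h1 : pf x1.1 x1.2 = pf x2.1 x2.2 := by
        rw [← hΦT x1.1 x1.2, ← hΦT x2.1 x2.2, heq']
      have h2 : x1.1 = x2.1 := by
        rw [hp2 x1.1 x1.2, hp2 x2.1 x2.2, h1]
      exact Subtype.ext h2
    have hcard : G.card = F.card := by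
      rw [hGdef, Finset.card_image_of_injOn hinj, Finset.card_attach]
    rw [← hcard]
    refine hVmult (κf x₀.1 x₀.2) G ?_ ⟨z, ?_⟩
    · intro V hV
      obtain ⟨x, _, rfl⟩ := Finset.mem_image.mp hV
      exact (hΦA x.1 x.2).1
    · intro V hV
      obtain ⟨x, _, rfl⟩ := Finset.mem_image.mp hV
      exact hΦz x.1 x.2



/-- If `X`, `Y` are bounded metric spaces such that for every `ε > 0` there
is `A ⊆ X` and a homothety `h_ε : A → Y` with `ε`-dense image, then `cdim X ≥ dim Y`. -/
theorem statement11 {X Y : Type*} [MetricSpace X] [MetricSpace Y]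
    (hX : Bornology.IsBounded (univ : Set X)) (hY : Bornology.IsBounded (univ : Set Y))
    (h : ∀ ε : ℝ, 0 < ε → ∃ A : Set X, ∃ f : X → Y, ∃ lam : ℝ, 0 < lam ∧
      (∀ a ∈ A, ∀ b ∈ A, dist (f a) (f b) = lam * dist a b) ∧
      ∀ y : Y, ∃ a ∈ A, dist y (f a) < ε) :
    topDim Y ≤ cdim X := by
  refine le_sInf ?_
  rintro k ⟨m, rfl, hCX⟩
  have hT : TopDimLE Y m := cdim_to_topdim (cdim_transfer hX h hCX)
  exact sInf_le ⟨m, rfl, hT⟩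

end BuyaloLebedeva
end
end

section
/- The boundary at infinity of every cobounded, hyperbolic, proper, geodesic metric space X, endowed with any visual metric, is locally self-similar. -/
open Set Filter ENNReal

noncomputable section

namespace BuyaloLebedeva

/-! ### Auxiliary lemmas for the proof of Statement 14. -/

section AuxGP

variable {X : Type*} [MetricSpace X]

theorem gp_nonneg (o x y : X) : 0 ≤ gromovProd o x y := by
  have h1 := dist_triangle x o y
  have h2 : dist o y = dist y o := dist_comm o y
  simp only [gromovProd]
  linarith

theorem gp_le (o x y : X) : gromovProd o x y ≤ dist y o := by
  have := dist_triangle x y o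
  simp only [gromovProd]
  linarith

theorem gp_comm (o x y : X) : gromovProd o x y = gromovProd o y x := by
  simp only [gromovProd, dist_comm x y]
  ring

theorem gp_self (o x : X) : gromovProd o x x = dist x o := by
  simp [gromovProd]

theorem gp_base (p q x y : X) : gromovProd q x y ≤ gromovProd p x y + dist p q := by
  have h1 := dist_triangle x p q
  have h2 := dist_triangle y p q
  simp only [gromovProd]
  linarith

theorem gp_isom (φ : X ≃ᵢ X) (p x y : X) :
    gromovProd (φ p) (φ x) (φ y) = gromovProd p x y := by
  simp [gromovProd, IsometryEquiv.dist_eq]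

theorem gp_identity (o w y z : X) :
    gromovProd w y z =
      gromovProd o y z + dist o w - gromovProd o y w - gromovProd o z w := by
  simp only [gromovProd]
  rw [dist_comm o w]
  ring

theorem ennliminf_add_const (u : ℕ → ℝ≥0∞) (C : ℝ≥0∞) :
    Filter.liminf (fun k => u k + C) Filter.atTop = Filter.liminf u Filter.atTop + C := by
  rw [Filter.liminf_eq_iSup_iInf_of_nat, Filter.liminf_eq_iSup_iInf_of_nat, ENNReal.iSup_add]
  exact iSup_congr fun n => by
    rw [ENNReal.iInf_add]
    exact iInf_congr fun i => by rw [ENNReal.iInf_add]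

theorem convToInf_large {o : X} {s : ℕ → X} (hs : ConvToInf o s) (B : ℝ) :
    ∃ N : ℕ, ∀ p ≥ N, ∀ q ≥ N, B ≤ gromovProd o (s p) (s q) := by
  have h := (Filter.tendsto_atTop.mp hs) B
  rw [Filter.eventually_atTop] at h
  obtain ⟨P, hP⟩ := h
  refine ⟨max P.1 P.2, fun p hp q hq => ?_⟩
  exact hP (p, q) ⟨le_trans (le_max_left _ _) hp, le_trans (le_max_right _ _) hq⟩

/-- The map induced by an isometry on sequences converging to infinity. -/
def seqMap (o : X) (φ : X ≃ᵢ X) (s : {s : ℕ → X // ConvToInf o s}) :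
    {s : ℕ → X // ConvToInf o s} := by
  refine ⟨fun k => φ (s.1 k), ?_⟩
  have key : ∀ p : ℕ × ℕ,
      gromovProd o (s.1 p.1) (s.1 p.2) + -(dist o (φ o)) ≤
        gromovProd o (φ (s.1 p.1)) (φ (s.1 p.2)) := by
    intro p
    have h1 := gp_base o (φ o) (φ (s.1 p.1)) (φ (s.1 p.2))
    have h2 := gp_isom φ o (s.1 p.1) (s.1 p.2)
    linarith
  exact Filter.tendsto_atTop_mono key
    (Filter.tendsto_atTop_add_const_right _ _ s.2)

theorem seqMap_equiv (o : X) (φ : X ≃ᵢ X) {x y : {s : ℕ → X // ConvToInf o s}}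
    (h : seqEquiv o x y) : seqEquiv o (seqMap o φ x) (seqMap o φ y) := by
  have key : ∀ k : ℕ,
      gromovProd o (x.1 k) (y.1 k) + -(dist o (φ o)) ≤
        gromovProd o ((seqMap o φ x).1 k) ((seqMap o φ y).1 k) := by
    intro k
    have h1 := gp_base o (φ o) (φ (x.1 k)) (φ (y.1 k))
    have h2 := gp_isom φ o (x.1 k) (y.1 k)
    simp only [seqMap]
    linarith
  exact Filter.tendsto_atTop_mono key
    (Filter.tendsto_atTop_add_const_right _ _ h)

/-- The map induced by an isometry on the boundary at infinity. -/
def bdryMap (o : X) (φ : X ≃ᵢ X) : Bdry X o → Bdry X o :=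
  Quot.map (seqMap o φ) (fun _ _ h => seqMap_equiv o φ h)

theorem bdryMap_mk (o : X) (φ : X ≃ᵢ X) (s : {s : ℕ → X // ConvToInf o s}) :
    bdryMap o φ (Quot.mk (seqEquiv o) s) = Quot.mk (seqEquiv o) (seqMap o φ s) := rfl

theorem bdryMap_symm_apply (o : X) (φ : X ≃ᵢ X) (ξ : Bdry X o) :
    bdryMap o φ.symm (bdryMap o φ ξ) = ξ := by
  refine Quot.inductionOn ξ fun s => ?_
  rw [bdryMap_mk, bdryMap_mk]
  congr 1
  exact Subtype.ext (funext fun k => φ.symm_apply_apply (s.1 k))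

theorem bgp_le_liminf (o : X) {ξ η : Bdry X o} {y z : {s : ℕ → X // ConvToInf o s}}
    (hy : Quot.mk (seqEquiv o) y = ξ) (hz : Quot.mk (seqEquiv o) z = η) :
    bgp o ξ η ≤
      Filter.liminf (fun i => ENNReal.ofReal (gromovProd o (y.1 i) (z.1 i))) Filter.atTop :=
  iInf_le_of_le ⟨y, hy⟩ (iInf_le_of_le ⟨z, hz⟩ le_rfl)


theorem le_bgp_add (o : X) {ξ η : Bdry X o} {B C : ℝ≥0∞}
    (h : ∀ y z : {s : ℕ → X // ConvToInf o s}, Quot.mk (seqEquiv o) y = ξ →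
      Quot.mk (seqEquiv o) z = η →
      B ≤ Filter.liminf (fun i => ENNReal.ofReal (gromovProd o (y.1 i) (z.1 i)))
            Filter.atTop + C) :
    B ≤ bgp o ξ η + C := by
  rw [← tsub_le_iff_right]
  exact le_iInf fun y => le_iInf fun z =>
    tsub_le_iff_right.mpr (h y.1 z.1 y.2 z.2)

/-- Key estimate B : the induced boundary map does not contract too much. -/
theorem keyB (o w : X) (φ : X ≃ᵢ X) (c : ℝ) (hc : dist o (φ w) ≤ c) (ξ η : Bdry X o) :
    bgp o ξ η ≤ bgp o (bdryMap o φ ξ) (bdryMap o φ η) + ENNReal.ofReal (dist o w + c) := by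
  have hcnn : (0 : ℝ) ≤ c := le_trans dist_nonneg hc
  refine le_bgp_add o ?_
  intro u v hu hv
  set a := seqMap o φ.symm u with ha_def
  set b := seqMap o φ.symm v with hb_def
  have ha : Quot.mk (seqEquiv o) a = ξ := by
    have h := congrArg (bdryMap o φ.symm) hu
    rw [bdryMap_symm_apply] at h
    rw [← h]; rfl
  have hb : Quot.mk (seqEquiv o) b = η := by
    have h := congrArg (bdryMap o φ.symm) hv
    rw [bdryMap_symm_apply] at h
    rw [← h]; rfl
  have step1 := bgp_le_liminf o ha hb
  have step2 : ∀ i : ℕ, gromovProd o (a.1 i) (b.1 i) ≤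
      gromovProd o (u.1 i) (v.1 i) + (dist o w + c) := by
    intro i
    have e1 := gp_base w o (a.1 i) (b.1 i)
    have ea : φ (a.1 i) = u.1 i := φ.apply_symm_apply (u.1 i)
    have eb : φ (b.1 i) = v.1 i := φ.apply_symm_apply (v.1 i)
    have e2 : gromovProd w (a.1 i) (b.1 i) = gromovProd (φ w) (u.1 i) (v.1 i) := by
      rw [← gp_isom φ w (a.1 i) (b.1 i), ea, eb]
    have e3 := gp_base o (φ w) (u.1 i) (v.1 i)
    have e4 : dist w o = dist o w := dist_comm w o
    linarith
  calc bgp o ξ η ≤ _ := step1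
    _ ≤ Filter.liminf
        (fun i => ENNReal.ofReal (gromovProd o (u.1 i) (v.1 i)) +
          ENNReal.ofReal (dist o w + c)) Filter.atTop := by
        refine Filter.liminf_le_liminf (Filter.Eventually.of_forall fun i => ?_)
        rw [← ENNReal.ofReal_add (gp_nonneg _ _ _) (by positivity)]
        exact ENNReal.ofReal_le_ofReal (step2 i)
    _ = _ + ENNReal.ofReal (dist o w + c) := ennliminf_add_const _ _

/-- Key estimate A : the induced boundary map expands Gromov products by about `T`. -/
theorem keyA (o w : X) (φ : X ≃ᵢ X) (δ c T : ℝ) (hδ0 : 0 ≤ δ)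
    (hhyp : IsDeltaHyperbolic X δ) (hT : 0 ≤ T) (hdow : dist o w = T)
    (hc : dist o (φ w) ≤ c) (x : {s : ℕ → X // ConvToInf o s}) (N : ℕ)
    (hxi : gromovProd o w (x.1 N) = T)
    (hxk : ∀ k ≥ N, T + 2*δ ≤ gromovProd o (x.1 k) (x.1 N))
    (ξ η ξ₀ : Bdry X o) (hx0 : Quot.mk (seqEquiv o) x = ξ₀)
    (hbξ : ENNReal.ofReal (T + 2*δ + 1) ≤ bgp o ξ ξ₀)
    (hbη : ENNReal.ofReal (T + 2*δ + 1) ≤ bgp o η ξ₀) :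
    bgp o (bdryMap o φ ξ) (bdryMap o φ η) + ENNReal.ofReal T ≤
      bgp o ξ η + ENNReal.ofReal (2*δ + c) := by
  have hcnn : (0 : ℝ) ≤ c := le_trans dist_nonneg hc
  refine le_bgp_add o ?_
  intro y z hy hz
  -- the eventual estimate on a sequence representing a point of `A`
  have evt : ∀ (u : {s : ℕ → X // ConvToInf o s}),
      ENNReal.ofReal (T + 2*δ + 1) ≤
        Filter.liminf (fun k => ENNReal.ofReal (gromovProd o (u.1 k) (x.1 k)))
          Filter.atTop →
      ∀ᶠ k in Filter.atTop, T - δ ≤ gromovProd o (u.1 k) w := by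
    intro u hu
    have h1 : ∀ᶠ k in Filter.atTop, T + 2*δ < gromovProd o (u.1 k) (x.1 k) := by
      have hlt : ENNReal.ofReal (T + 2*δ) <
          Filter.liminf (fun k => ENNReal.ofReal (gromovProd o (u.1 k) (x.1 k)))
            Filter.atTop :=
        lt_of_lt_of_le (ENNReal.ofReal_lt_ofReal_iff_of_nonneg (by linarith) |>.mpr
          (by linarith)) hu
      filter_upwards [Filter.eventually_lt_of_lt_liminf hlt] with k hk
      exact (ENNReal.ofReal_lt_ofReal_iff_of_nonneg (by linarith)).mp hk
    filter_upwards [h1, Filter.eventually_ge_atTop N] with k hk1 hk2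
    have h2 : T + δ ≤ gromovProd o (u.1 k) (x.1 N) := by
      have := hhyp o (u.1 k) (x.1 N) (x.1 k)
      have hmin : T + 2*δ ≤ min (gromovProd o (u.1 k) (x.1 k))
          (gromovProd o (x.1 k) (x.1 N)) :=
        le_min (le_of_lt hk1) (hxk k hk2)
      linarith
    have h3 := hhyp o (u.1 k) w (x.1 N)
    have h4 : gromovProd o (x.1 N) w = T := by rw [gp_comm]; exact hxi
    have hmin : T ≤ min (gromovProd o (u.1 k) (x.1 N)) (gromovProd o (x.1 N) w) := by
      rw [h4]; exact le_min (by linarith) le_rfl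
    linarith
  have hy' : Quot.mk (seqEquiv o) (seqMap o φ y) = bdryMap o φ ξ := by
    rw [← hy]; rfl
  have hz' : Quot.mk (seqEquiv o) (seqMap o φ z) = bdryMap o φ η := by
    rw [← hz]; rfl
  have step1 := bgp_le_liminf o hy' hz'
  have hey := evt y (le_trans hbξ (bgp_le_liminf o hy hx0))
  have hez := evt z (le_trans hbη (bgp_le_liminf o hz hx0))
  have evfinal : ∀ᶠ k in Filter.atTop,
      ENNReal.ofReal (gromovProd o ((seqMap o φ y).1 k) ((seqMap o φ z).1 k)) +
          ENNReal.ofReal T ≤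
        ENNReal.ofReal (gromovProd o (y.1 k) (z.1 k)) + ENNReal.ofReal (2*δ + c) := by
    filter_upwards [hey, hez] with k h1 h2
    have e1 := gp_identity o w (y.1 k) (z.1 k)
    have e2 := gp_base (φ w) o (φ (y.1 k)) (φ (z.1 k))
    have e3 := gp_isom φ w (y.1 k) (z.1 k)
    have e4 : dist (φ w) o = dist o (φ w) := dist_comm _ _
    have e5 : gromovProd o (φ (y.1 k)) (φ (z.1 k)) + T ≤
        gromovProd o (y.1 k) (z.1 k) + (2*δ + c) := by
      rw [hdow] at e1
      linarith
    have e6 : (seqMap o φ y).1 k = φ (y.1 k) := rfl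
    have e7 : (seqMap o φ z).1 k = φ (z.1 k) := rfl
    rw [e6, e7, ← ENNReal.ofReal_add (gp_nonneg _ _ _) hT,
      ← ENNReal.ofReal_add (gp_nonneg _ _ _) (by linarith)]
    exact ENNReal.ofReal_le_ofReal e5
  calc bgp o (bdryMap o φ ξ) (bdryMap o φ η) + ENNReal.ofReal T
      ≤ Filter.liminf
          (fun i => ENNReal.ofReal (gromovProd o ((seqMap o φ y).1 i)
            ((seqMap o φ z).1 i))) Filter.atTop + ENNReal.ofReal T :=
        add_le_add_left step1 _
    _ = Filter.liminf
          (fun i => ENNReal.ofReal (gromovProd o ((seqMap o φ y).1 i)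
            ((seqMap o φ z).1 i)) + ENNReal.ofReal T) Filter.atTop :=
        (ennliminf_add_const _ _).symm
    _ ≤ Filter.liminf
          (fun i => ENNReal.ofReal (gromovProd o (y.1 i) (z.1 i)) +
            ENNReal.ofReal (2*δ + c)) Filter.atTop :=
        Filter.liminf_le_liminf evfinal
    _ = Filter.liminf (fun i => ENNReal.ofReal (gromovProd o (y.1 i) (z.1 i)))
          Filter.atTop + ENNReal.ofReal (2*δ + c) := ennliminf_add_const _ _

end AuxGP

/-- The boundary at infinity of every cobounded, hyperbolic, proper,
geodesic metric space, endowed with any visual metric, is locally self-similar. -/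
theorem statement14 {X : Type*} [MetricSpace X] (hgeo : IsGeodesicSpace X)
    (hhyp : IsHyperbolic X) (hproper : ProperSpace X) (hcob : Cobounded X)
    (o : X) (dB : MetricSpace (Bdry X o)) (hvis : IsVisualMetric o dB) :
    letI := dB
    LocallySimilar (Bdry X o) (Bdry X o) := by
  show LocallySimilar (Bdry X o) (Bdry X o)
  obtain ⟨a, c₁, c₂, ha1, hc₁, hc₂, hdist⟩ := hvis
  obtain ⟨δ, hδ0, hδ⟩ := hhyp
  obtain ⟨A₀, hA₀bdd, hA₀⟩ := hcob
  obtain ⟨C0, hC0⟩ := Metric.isBounded_iff.mp hA₀bdd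
  set c := max C0 0 with hc_def
  have hc0 : (0:ℝ) ≤ c := le_max_right _ _
  obtain ⟨g₀, a₀, ha₀A, hg₀a₀⟩ : ∃ g₀ : X ≃ᵢ X, ∃ a₀ ∈ A₀, g₀ a₀ = o := by
    obtain ⟨g₀, hg₀⟩ := hA₀ o
    obtain ⟨a₀, ha₀, h⟩ := hg₀
    exact ⟨g₀, a₀, ha₀, h⟩
  have ha0 : (0:ℝ) < a := lt_trans one_pos ha1
  set K := max 0 (2*δ + 1 - Real.logb a c₁) with hK_def
  have hK0 : (0:ℝ) ≤ K := le_max_left _ _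
  set lam := max 1 (c₂ / c₁ * a ^ (K + 2*δ + c)) with hlam_def
  have hlam1 : (1:ℝ) ≤ lam := le_max_left _ _
  have hlam0 : (0:ℝ) < lam := lt_of_lt_of_le one_pos hlam1
  refine ⟨lam, hlam1, max 2 (a ^ (K + 2*δ + c + 1)),
    lt_of_lt_of_le one_lt_two (le_max_left _ _), ?_⟩
  intro R hR A' _hA'b hA'
  have hR2 : (2:ℝ) ≤ R := le_trans (le_max_left _ _) hR
  have hRpos : (0:ℝ) < R := lt_of_lt_of_le two_pos hR2
  rcases Set.eq_empty_or_nonempty A' with hAe | ⟨ξ₀, hξ₀⟩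
  · exact ⟨id, fun z hz => by rw [hAe] at hz; exact absurd hz (Set.notMem_empty z)⟩
  set T := Real.logb a R - K with hT_def
  have hTbig : 2*δ + c + 1 ≤ T := by
    have h1 : a ^ (K + 2*δ + c + 1) ≤ R := le_trans (le_max_right _ _) hR
    have h2 : K + 2*δ + c + 1 ≤ Real.logb a R := by
      have h3 := Real.logb_le_logb_of_le ha1 (Real.rpow_pos_of_pos ha0 (K + 2*δ + c + 1)) h1
      rwa [Real.logb_rpow ha0 (ne_of_gt ha1)] at h3
    simp only [hT_def]
    linarith
  have hT0 : 0 ≤ T := by linarith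
  have haT : a ^ T = R / a ^ K := by
    rw [hT_def, Real.rpow_sub ha0, Real.rpow_logb ha0 (ne_of_gt ha1) hRpos]
  have hvis_le1 : ∀ t : ℝ≥0∞, visFactor a t ≤ 1 := by
    intro t; rw [visFactor]; split
    · linarith
    · exact Real.rpow_le_one_of_one_le_of_nonpos (le_of_lt ha1)
        (neg_nonpos.mpr ENNReal.toReal_nonneg)
  have hUbdd : Bornology.IsBounded (Set.univ : Set (Bdry X o)) := by
    refine Metric.isBounded_iff.mpr ⟨c₂, fun ξ _ η _ => ?_⟩
    calc dist ξ η ≤ c₂ * visFactor a (bgp o ξ η) := (hdist ξ η).2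
      _ ≤ c₂ * 1 := by nlinarith [hvis_le1 (bgp o ξ η)]
      _ = c₂ := mul_one c₂
  have hA'bdd : Bornology.IsBounded A' := hUbdd.subset (Set.subset_univ _)
  have hsmall : ∀ ξ ∈ A', ∀ η ∈ A', ENNReal.ofReal (T + 2*δ + 1) ≤ bgp o ξ η := by
    intro ξ hξ η hη
    by_cases htop : bgp o ξ η = ⊤
    · rw [htop]; exact le_top
    · have hd1 : dist ξ η ≤ 1 / R := by
        calc dist ξ η ≤ Metric.diam A' := Metric.dist_le_diam_of_mem hA'bdd hξ hη
          _ ≤ min 1 (Metric.diam (Set.univ : Set (Bdry X o)) / lam) / R := hA'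
          _ ≤ 1 / R := by
              apply div_le_div_of_nonneg_right (min_le_left _ _) hRpos.le
      have hv := le_trans ((hdist ξ η).1) hd1
      rw [visFactor, if_neg htop] at hv
      have h2 : a ^ (-(bgp o ξ η).toReal) ≤ 1 / (c₁ * R) := by
        rw [le_div_iff₀ (by positivity)]
        have hpow := Real.rpow_pos_of_pos ha0 (-(bgp o ξ η).toReal)
        calc a ^ (-(bgp o ξ η).toReal) * (c₁ * R)
            = (c₁ * a ^ (-(bgp o ξ η).toReal)) * R := by ring
          _ ≤ (1/R) * R := mul_le_mul_of_nonneg_right hv (le_of_lt hRpos)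
          _ = 1 := by field_simp
      have h3 : -(bgp o ξ η).toReal ≤ Real.logb a (1 / (c₁ * R)) := by
        rw [← Real.rpow_logb ha0 (ne_of_gt ha1)
          (show (0:ℝ) < 1/(c₁*R) by positivity)] at h2
        exact (Real.rpow_le_rpow_left_iff ha1).mp h2
      have h4 : Real.logb a (1/(c₁*R)) = -(Real.logb a c₁ + Real.logb a R) := by
        rw [one_div, Real.logb_inv, Real.logb_mul (ne_of_gt hc₁) (ne_of_gt hRpos)]
      have h5 : T + 2*δ + 1 ≤ (bgp o ξ η).toReal := by
        have hK2 : 2*δ + 1 - Real.logb a c₁ ≤ K := le_max_right _ _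
        rw [h4] at h3
        simp only [hT_def]
        linarith
      calc ENNReal.ofReal (T + 2*δ + 1) ≤ ENNReal.ofReal (bgp o ξ η).toReal :=
            ENNReal.ofReal_le_ofReal h5
        _ = bgp o ξ η := ENNReal.ofReal_toReal htop
  obtain ⟨x, hx⟩ := Quot.exists_rep ξ₀
  obtain ⟨N, hN⟩ := convToInf_large x.2 (T + 2*δ + 1)
  have hdoxi : T ≤ dist o (x.1 N) := by
    have h := hN N le_rfl N le_rfl
    rw [gp_self] at h
    rw [dist_comm]
    linarith
  obtain ⟨γ, hγ0, hγd, hγiso⟩ := hgeo o (x.1 N)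
  set w := γ T with hw_def
  have hd0 : (0:ℝ) ≤ dist o (x.1 N) := dist_nonneg
  have hdow : dist o w = T := by
    have h := hγiso 0 ⟨le_rfl, hd0⟩ T ⟨hT0, hdoxi⟩
    rw [hγ0] at h
    rw [hw_def, h, zero_sub, abs_neg, abs_of_nonneg hT0]
  have hdwx : dist w (x.1 N) = dist o (x.1 N) - T := by
    have h := hγiso T ⟨hT0, hdoxi⟩ (dist o (x.1 N)) ⟨hd0, le_rfl⟩
    rw [hγd] at h
    rw [hw_def, h, abs_of_nonpos (by linarith)]
    ring
  have hgpw : gromovProd o w (x.1 N) = T := by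
    have e1 : dist w o = T := by rw [dist_comm]; exact hdow
    have e2 : dist (x.1 N) o = dist o (x.1 N) := dist_comm _ _
    simp only [gromovProd, e1, e2, hdwx]
    ring
  obtain ⟨g, aw, hawA, hgaw⟩ : ∃ g : X ≃ᵢ X, ∃ aw ∈ A₀, g aw = w := by
    obtain ⟨g, hg⟩ := hA₀ w
    obtain ⟨aw, h1, h2⟩ := hg
    exact ⟨g, aw, h1, h2⟩
  have hφw : dist o ((g.symm.trans g₀) w) ≤ c := by
    have h1 : (g.symm.trans g₀) w = g₀ aw := by
      simp only [IsometryEquiv.trans_apply]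
      rw [← hgaw, g.symm_apply_apply]
    rw [h1, ← hg₀a₀, IsometryEquiv.dist_eq]
    exact le_trans (hC0 ha₀A hawA) (le_max_left _ _)
  refine ⟨bdryMap o (g.symm.trans g₀), ?_⟩
  intro z hz z' hz'
  by_cases hzz : z = z'
  · subst hzz
    constructor <;> simp [dist_self]
  · have hbzz : bgp o z z' ≠ ⊤ := by
      intro htop
      have h := (hdist z z').2
      rw [htop, visFactor, if_pos rfl, mul_zero] at h
      exact hzz (dist_le_zero.mp h)
    have hxk : ∀ k ≥ N, T + 2*δ ≤ gromovProd o (x.1 k) (x.1 N) := fun k hk => by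
      have := hN k hk N le_rfl; linarith
    have hA := keyA o w (g.symm.trans g₀) δ c T hδ0 hδ hT0 hdow hφw x N hgpw hxk
      z z' ξ₀ hx (hsmall z hz ξ₀ hξ₀) (hsmall z' hz' ξ₀ hξ₀)
    have hB := keyB o w (g.symm.trans g₀) c hφw z z'
    rw [hdow] at hB
    have hΦtop : bgp o (bdryMap o (g.symm.trans g₀) z) (bdryMap o (g.symm.trans g₀) z') ≠ ⊤ := by
      intro htop
      rw [htop, top_add] at hA
      exact ENNReal.add_ne_top.mpr ⟨hbzz, ENNReal.ofReal_ne_top⟩ (top_le_iff.mp hA)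
    have hsA : (bgp o (bdryMap o (g.symm.trans g₀) z) (bdryMap o (g.symm.trans g₀) z')).toReal
        + T ≤ (bgp o z z').toReal + (2*δ + c) := by
      rw [← ENNReal.ofReal_toReal hΦtop, ← ENNReal.ofReal_toReal hbzz,
        ← ENNReal.ofReal_add ENNReal.toReal_nonneg hT0,
        ← ENNReal.ofReal_add ENNReal.toReal_nonneg (by linarith : (0:ℝ) ≤ 2*δ+c)] at hA
      exact (ENNReal.ofReal_le_ofReal_iff
        (add_nonneg ENNReal.toReal_nonneg (by linarith))).mp hA
    have hsB : (bgp o z z').toReal ≤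
        (bgp o (bdryMap o (g.symm.trans g₀) z) (bdryMap o (g.symm.trans g₀) z')).toReal
          + (T + c) := by
      rw [← ENNReal.ofReal_toReal hbzz, ← ENNReal.ofReal_toReal hΦtop,
        ← ENNReal.ofReal_add ENNReal.toReal_nonneg (add_nonneg hT0 hc0)] at hB
      exact (ENNReal.ofReal_le_ofReal_iff
        (add_nonneg ENNReal.toReal_nonneg (add_nonneg hT0 hc0))).mp hB
    have hv1 := (hdist z z').1
    have hv2 := (hdist z z').2
    rw [visFactor, if_neg hbzz] at hv1 hv2
    have hw1 := (hdist (bdryMap o (g.symm.trans g₀) z) (bdryMap o (g.symm.trans g₀) z')).1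
    have hw2 := (hdist (bdryMap o (g.symm.trans g₀) z) (bdryMap o (g.symm.trans g₀) z')).2
    rw [visFactor, if_neg hΦtop] at hw1 hw2
    set s := (bgp o z z').toReal with hs_def
    set sΦ := (bgp o (bdryMap o (g.symm.trans g₀) z) (bdryMap o (g.symm.trans g₀) z')).toReal
      with hsΦ_def
    have hu0 : (0:ℝ) < a ^ (-s) := Real.rpow_pos_of_pos ha0 _
    have hvpos : (0:ℝ) < a ^ (-sΦ) := Real.rpow_pos_of_pos ha0 _
    have hP0 : (0:ℝ) < a ^ K := Real.rpow_pos_of_pos ha0 _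
    have hQ0 : (0:ℝ) < a ^ (2*δ+c) := Real.rpow_pos_of_pos ha0 _
    have hQc0 : (0:ℝ) < a ^ c := Real.rpow_pos_of_pos ha0 _
    have hPQ : a ^ (K + 2*δ + c) = a ^ K * a ^ (2*δ+c) := by
      rw [← Real.rpow_add ha0]; congr 1; ring
    have hkey : c₂ * (a ^ K * a ^ (2*δ+c)) ≤ c₁ * lam := by
      have h := le_max_right 1 (c₂/c₁ * a ^ (K + 2*δ + c))
      rw [← hlam_def] at h
      rw [hPQ] at h
      rw [div_mul_eq_mul_div, div_le_iff₀ hc₁] at h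
      linarith
    have hF3 : (R / a ^ K) * ((a ^ (2*δ+c))⁻¹ * a ^ (-s)) ≤ a ^ (-sΦ) := by
      have h1 : a ^ (T - (2*δ+c) - s) ≤ a ^ (-sΦ) :=
        (Real.rpow_le_rpow_left_iff ha1).mpr (by linarith)
      have h2 : a ^ (T - (2*δ+c) - s) = (R / a ^ K) * ((a ^ (2*δ+c))⁻¹ * a ^ (-s)) := by
        rw [← haT, ← Real.rpow_neg (le_of_lt ha0) (2*δ+c), ← Real.rpow_add ha0,
          ← Real.rpow_add ha0]
        congr 1; ring
      rwa [h2] at h1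
    have hF4 : a ^ (-sΦ) ≤ (R / a ^ K) * (a ^ c * a ^ (-s)) := by
      have h1 : a ^ (-sΦ) ≤ a ^ (T + c - s) :=
        (Real.rpow_le_rpow_left_iff ha1).mpr (by linarith)
      have h2 : a ^ (T + c - s) = (R / a ^ K) * (a ^ c * a ^ (-s)) := by
        rw [← haT, ← Real.rpow_add ha0, ← Real.rpow_add ha0]
        congr 1; ring
      rwa [h2] at h1
    constructor
    · -- lower bound
      rw [div_le_iff₀ hlam0]
      have hstep : R * c₂ * a ^ (-s) ≤
          c₁ * ((R / a ^ K) * ((a ^ (2*δ+c))⁻¹ * a ^ (-s))) * lam := by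
        have heq : c₁ * ((R / a ^ K) * ((a ^ (2*δ+c))⁻¹ * a ^ (-s))) * lam
            = (c₁ * lam) * (R * a ^ (-s)) / (a ^ K * a ^ (2*δ+c)) := by
          field_simp
        rw [heq, le_div_iff₀ (by positivity)]
        calc R * c₂ * a ^ (-s) * (a ^ K * a ^ (2*δ+c))
            = (c₂ * (a ^ K * a ^ (2*δ+c))) * (R * a ^ (-s)) := by ring
          _ ≤ (c₁ * lam) * (R * a ^ (-s)) :=
              mul_le_mul_of_nonneg_right hkey (by positivity)
      calc R * dist z z' ≤ R * (c₂ * a ^ (-s)) :=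
            mul_le_mul_of_nonneg_left hv2 (le_of_lt hRpos)
        _ = R * c₂ * a ^ (-s) := by ring
        _ ≤ c₁ * ((R / a ^ K) * ((a ^ (2*δ+c))⁻¹ * a ^ (-s))) * lam := hstep
        _ ≤ (c₁ * a ^ (-sΦ)) * lam :=
            mul_le_mul_of_nonneg_right
              (mul_le_mul_of_nonneg_left hF3 (le_of_lt hc₁)) (le_of_lt hlam0)
        _ ≤ dist (bdryMap o (g.symm.trans g₀) z) (bdryMap o (g.symm.trans g₀) z') * lam :=
            mul_le_mul_of_nonneg_right hw1 (le_of_lt hlam0)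
    · -- upper bound
      have hQc : a ^ c ≤ a ^ K * (a ^ K * a ^ (2*δ+c)) := by
        have h1 : a ^ c ≤ a ^ (K + (K + 2*δ + c)) :=
          (Real.rpow_le_rpow_left_iff ha1).mpr (by linarith)
        rwa [Real.rpow_add ha0, hPQ] at h1
      have hkey2 : c₂ * a ^ c ≤ c₁ * lam * a ^ K := by
        calc c₂ * a ^ c ≤ c₂ * (a ^ K * (a ^ K * a ^ (2*δ+c))) :=
              mul_le_mul_of_nonneg_left hQc (le_of_lt hc₂)
          _ = (c₂ * (a ^ K * a ^ (2*δ+c))) * a ^ K := by ring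
          _ ≤ (c₁ * lam) * a ^ K := mul_le_mul_of_nonneg_right hkey (le_of_lt hP0)
      have hu_le : a ^ (-s) ≤ dist z z' / c₁ := by
        rw [le_div_iff₀ hc₁]
        linarith
      calc dist (bdryMap o (g.symm.trans g₀) z) (bdryMap o (g.symm.trans g₀) z')
          ≤ c₂ * a ^ (-sΦ) := hw2
        _ ≤ c₂ * ((R / a ^ K) * (a ^ c * a ^ (-s))) :=
            mul_le_mul_of_nonneg_left hF4 (le_of_lt hc₂)
        _ ≤ c₂ * ((R / a ^ K) * (a ^ c * (dist z z' / c₁))) := by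
            refine mul_le_mul_of_nonneg_left ?_ (le_of_lt hc₂)
            refine mul_le_mul_of_nonneg_left ?_ (by positivity)
            exact mul_le_mul_of_nonneg_left hu_le (le_of_lt hQc0)
        _ = (c₂ * a ^ c) * (R * dist z z') / (a ^ K * c₁) := by
            field_simp
        _ ≤ (c₁ * lam * a ^ K) * (R * dist z z') / (a ^ K * c₁) := by
            have hnum : (c₂ * a ^ c) * (R * dist z z') ≤
                (c₁ * lam * a ^ K) * (R * dist z z') :=
              mul_le_mul_of_nonneg_right hkey2
                (mul_nonneg (le_of_lt hRpos) dist_nonneg)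
            exact div_le_div_of_nonneg_right hnum (by positivity)
        _ = lam * R * dist z z' := by
            field_simp

end BuyaloLebedeva
end
end

section
/- If a metric space X is asymptotically similar to a compact metric space Y, then dim Y ≤ asdim X. -/
open Set Filter ENNReal

noncomputable section

namespace BuyaloLebedeva

/-- If a metric space `X` is asymptotically similar to a compact metric
space `Y`, then `dim Y ≤ asdim X`. -/
theorem statement18 {X Y : Type*} [MetricSpace X] [MetricSpace Y] [CompactSpace Y]
    (h : AsympSimilar X Y) :
    topDim Y ≤ asdim X := by
  apply le_sInf
  rintro k ⟨n, rfl, hn⟩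
  refine sInf_le ⟨n, rfl, ?_⟩
  intro 𝒲 h𝒲o h𝒲c
  obtain ⟨Λ₀, lam, hΛ, hlam, R₀, hR₀, hsim⟩ := h
  obtain ⟨𝒰, hUo, hUc, hUm, hUmesh, -⟩ := hn 1 one_pos
  obtain ⟨δ, hδ, hleb⟩ := lebesgue_number_lemma_of_metric_sUnion
    (isCompact_univ (X := Y)) h𝒲o (by rw [h𝒲c])
  set M := (mesh 𝒰).toReal with hM
  have hM0 : 0 ≤ M := ENNReal.toReal_nonneg
  set R := max R₀ (lam * M / δ + 1) with hR
  have hRR₀ : R₀ ≤ R := le_max_left _ _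
  have hRpos : 0 < R := lt_of_lt_of_le (lt_trans one_pos hR₀) hRR₀
  have hlampos : 0 < lam := lt_of_lt_of_le one_pos hlam
  have hΛpos : 0 < Λ₀ := lt_of_lt_of_le one_pos hΛ
  have hkey : lam * M < δ * R := by
    have h1 : lam * M / δ + 1 ≤ R := le_max_right _ _
    have h2 : lam * M / δ < R := lt_of_lt_of_le (lt_add_one _) h1
    have := (div_lt_iff₀ hδ).mp h2
    linarith
  obtain ⟨f, hf, -⟩ := hsim R hRR₀ ∅ Bornology.isBounded_empty (by rw [Metric.diam_empty]; positivity)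
  have hfc : Continuous f := by
    apply LipschitzWith.continuous (K := (lam * R).toNNReal)
    apply LipschitzWith.of_dist_le_mul
    intro z z'
    have h2 := (hf z (mem_univ z) z' (mem_univ z')).2
    calc dist (f z) (f z') ≤ lam * R * dist z z' := h2
      _ = ((lam * R).toNNReal : ℝ) * dist z z' := by
          rw [Real.coe_toNNReal _ (by positivity)]
  have hdistM : ∀ U ∈ 𝒰, ∀ x ∈ U, ∀ x' ∈ U, dist x x' ≤ M := by
    intro U hU x hx x' hx'
    have h1 : edist x x' ≤ mesh 𝒰 := by
      refine le_trans (EMetric.edist_le_diam_of_mem hx hx') ?_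
      simp only [mesh]
      exact le_iSup₂ (f := fun (U : Set X) (_ : U ∈ 𝒰) => EMetric.diam U) U hU
    rw [dist_edist]
    exact ENNReal.toReal_mono hUmesh.ne h1
  have hsmall : ∀ U ∈ 𝒰, ∀ z z' : Y, f z ∈ U → f z' ∈ U → dist z z' < δ := by
    intro U hU z z' hz hz'
    have h1 : R * dist z z' / lam ≤ dist (f z) (f z') :=
      (hf z (mem_univ z) z' (mem_univ z')).1
    have h2 : dist (f z) (f z') ≤ M := hdistM U hU _ hz _ hz'
    have h3 : R * dist z z' ≤ lam * M := by
      have := (div_le_iff₀ hlampos).mp (le_trans h1 h2)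
      linarith
    have h4 : R * dist z z' < R * δ := by
      calc R * dist z z' ≤ lam * M := h3
        _ < δ * R := hkey
        _ = R * δ := by ring
    exact lt_of_mul_lt_mul_left h4 hRpos.le
  refine ⟨{V | (∃ U ∈ 𝒰, V = f ⁻¹' U) ∧ V.Nonempty}, ?_, ?_, ?_, ?_⟩
  · rintro V ⟨⟨U, hU, rfl⟩, -⟩
    exact (hUo U hU).preimage hfc
  · apply eq_univ_of_forall
    intro z
    have : f z ∈ ⋃₀ 𝒰 := by rw [hUc]; exact mem_univ _
    obtain ⟨U, hU, hzU⟩ := this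
    exact ⟨f ⁻¹' U, ⟨⟨U, hU, rfl⟩, ⟨z, hzU⟩⟩, hzU⟩
  · rintro V ⟨⟨U, hU, rfl⟩, ⟨z₀, hz₀⟩⟩
    obtain ⟨W, hW, hball⟩ := hleb z₀ (mem_univ z₀)
    refine ⟨W, hW, fun z hz => hball ?_⟩
    rw [Metric.mem_ball]
    exact hsmall U hU z z₀ hz hz₀
  · intro F hF hFz
    classical
    obtain ⟨z, hz⟩ := hFz
    have hF' : ∀ V : Set Y, ∃ U : Set X, V ∈ F → (U ∈ 𝒰 ∧ V = f ⁻¹' U) := by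
      intro V
      by_cases hV : V ∈ F
      · obtain ⟨⟨U, hU1, hU2⟩, -⟩ := hF hV
        exact ⟨U, fun _ => ⟨hU1, hU2⟩⟩
      · exact ⟨∅, fun h' => absurd h' hV⟩
    choose u hu using hF'
    have hinj : Set.InjOn u ↑F := by
      intro V₁ h₁ V₂ h₂ he
      rw [(hu V₁ h₁).2, (hu V₂ h₂).2, he]
    calc F.card = (F.image u).card := (Finset.card_image_of_injOn hinj).symm
      _ ≤ n + 1 := by
          apply hUm
          · intro U' hU'
            obtain ⟨V, hV, rfl⟩ := Finset.mem_image.mp hU'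
            exact (hu V hV).1
          · refine ⟨f z, ?_⟩
            intro U' hU'
            obtain ⟨V, hV, rfl⟩ := Finset.mem_image.mp hU'
            have : z ∈ V := hz V hV
            rw [(hu V hV).2] at this
            exact this

end BuyaloLebedeva
end
end
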